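/- arXiv:1209.5451 — 5 statements merged into one kernel-verified Lean document; each statement's English description precedes it below -/
import Mathlib

section
/- An ℵ₀-arc connected Hausdorff space contains no simple triod: there is no subspace that is the union of three arcs meeting pairwise exactly in a common endpoint. -/
open Set Topology

/-- The points `0` and `1` of the unit interval `[0,1]`. -/
def i0 : Set.Icc (0:ℝ) 1 := ⟨0, by norm_num⟩
def i1 : Set.Icc (0:ℝ) 1 := ⟨1, by norm_num⟩

/-- A subset `A` of a topological space `X` is an *arc* if, with the subspace
topology, it is homeomorphic to the closed unit interval `[0,1]`. -/
def IsArc {X : Type*} [TopologicalSpace X] (A : Set X) : Prop :=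
  Nonempty (A ≃ₜ Set.Icc (0:ℝ) 1)

/-- `X` is `n`-arc connected if any `n` points of `X` lie on a common arc. -/
def NArcConnected (X : Type*) [TopologicalSpace X] (n : ℕ) : Prop :=
  ∀ p : Fin n → X, ∃ A : Set X, IsArc A ∧ ∀ i, p i ∈ A

/-- `X` is `ℵ₀`-arc connected if every countable subset of `X` is contained in an arc. -/
def Aleph0ArcConnected (X : Type*) [TopologicalSpace X] : Prop :=
  ∀ S : Set X, S.Countable → ∃ A : Set X, IsArc A ∧ S ⊆ A

/-! Each arm of a triod is the closure of a countable set, so an arc containing these countable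
sets contains the whole triod, arcs being closed in a Hausdorff space. Carried into `[0,1]` by the
arc's homeomorphism, the arms become three intervals through one point, each extending beyond it;
two of them extend to the same side and therefore overlap away from the common point. -/

theorem Set.OrdConnected.exists_mem_inter_ne_of_same_side {α : Type*} [LinearOrder α]
    {s t : Set α} (hs : s.OrdConnected) (ht : t.OrdConnected) {q a b : α}
    (hqs : q ∈ s) (hqt : q ∈ t) (has : a ∈ s) (hbt : b ∈ t) (haq : a ≠ q) (hbq : b ≠ q)
    (hside : a < q ↔ b < q) : ∃ x ∈ s ∩ t, x ≠ q := by
  rcases haq.lt_or_gt with ha | ha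
  · have hb := hside.mp ha
    exact ⟨max a b, ⟨hs.out has hqs ⟨le_max_left a b, (max_lt ha hb).le⟩,
      ht.out hbt hqt ⟨le_max_right a b, (max_lt ha hb).le⟩⟩, (max_lt ha hb).ne⟩
  · have hb : q < b := hbq.symm.lt_of_le (not_lt.mp fun hb => ha.not_gt (hside.mpr hb))
    exact ⟨min a b, ⟨hs.out hqs has ⟨(lt_min ha hb).le, min_le_left a b⟩,
      ht.out hqt hbt ⟨(lt_min ha hb).le, min_le_right a b⟩⟩, (lt_min ha hb).ne'⟩

theorem exists_mem_inter_ne_of_ordConnected {α : Type*} [LinearOrder α] (C : Fin 3 → Set α)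
    (hC : ∀ i, (C i).OrdConnected) {q : α} (hq : ∀ i, q ∈ C i)
    (hne : ∀ i, ∃ a ∈ C i, a ≠ q) : ∃ i j, i ≠ j ∧ ∃ x ∈ C i ∩ C j, x ≠ q := by
  choose a haC haq using hne
  obtain ⟨i, j, hij, hside⟩ :=
    Fintype.exists_ne_map_eq_of_card_lt (fun i => a i < q) (by simp)
  exact ⟨i, j, hij, (hC i).exists_mem_inter_ne_of_same_side (hC j) (hq i) (hq j) (haC i) (haC j)
    (haq i) (haq j) hside.to_iff⟩

theorem IsArc.exists_mem_inter_ne_of_isPreconnected {X : Type*} [TopologicalSpace X]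
    {A : Set X} (hA : IsArc A) (C : Fin 3 → Set X) (hCA : ∀ i, C i ⊆ A)
    (hC : ∀ i, IsPreconnected (C i)) {q : X} (hq : ∀ i, q ∈ C i)
    (hne : ∀ i, ∃ a ∈ C i, a ≠ q) : ∃ i j, i ≠ j ∧ ∃ x ∈ C i ∩ C j, x ≠ q := by
  obtain ⟨e⟩ := hA
  set C' : Fin 3 → Set (Set.Icc (0:ℝ) 1) := fun i => e '' ((↑) ⁻¹' C i)
  have hqA : q ∈ A := hCA 0 (hq 0)
  have hC' : ∀ i, (C' i).OrdConnected := fun i => by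
    refine (IsPreconnected.image ?_ e e.continuous.continuousOn).ordConnected
    rw [← IsInducing.subtypeVal.isPreconnected_image, Subtype.image_preimage_coe,
      inter_eq_right.mpr (hCA i)]
    exact hC i
  have hne' : ∀ i, ∃ a ∈ C' i, a ≠ e ⟨q, hqA⟩ := fun i => by
    obtain ⟨a, ha, haq⟩ := hne i
    exact ⟨e ⟨a, hCA i ha⟩, mem_image_of_mem e ha,
      fun h => haq (congrArg Subtype.val (e.injective h))⟩
  obtain ⟨i, j, hij, _, ⟨⟨a, ha, rfl⟩, ⟨b, hb, hab⟩⟩, hxq⟩ :=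
    exists_mem_inter_ne_of_ordConnected C' hC' (fun i => mem_image_of_mem e (hq i)) hne'
  obtain rfl : a = b := (e.injective hab).symm
  exact ⟨i, j, hij, a, ⟨ha, hb⟩, fun h => hxq (congrArg e (Subtype.ext h))⟩

theorem IsArc.isClosed {X : Type*} [TopologicalSpace X] [T2Space X] {A : Set X} (hA : IsArc A) :
    IsClosed A := by
  obtain ⟨e⟩ := hA
  have : CompactSpace A := e.symm.compactSpace
  exact (isCompact_iff_compactSpace.mpr this).isClosed

/-- An `ℵ₀`-arc connected Hausdorff space contains no simple triod. -/
theorem aleph0_ac_no_triod {X : Type*} [TopologicalSpace X] [T2Space X]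
    (h : Aleph0ArcConnected X) :
    ¬ ∃ (q : X) (L : Fin 3 → Set.Icc (0:ℝ) 1 → X),
        (∀ i, Topology.IsEmbedding (L i)) ∧ (∀ i, L i i0 = q) ∧
        (∀ i j, i ≠ j → Set.range (L i) ∩ Set.range (L j) = {q}) := by
  rintro ⟨q, L, hemb, hq0, hinter⟩
  obtain ⟨D, hDc, hDd⟩ := TopologicalSpace.exists_countable_dense (Set.Icc (0:ℝ) 1)
  obtain ⟨A, hA, hDA⟩ := h (⋃ i, L i '' D) (countable_iUnion fun i => hDc.image _)
  have hLA : ∀ i, range (L i) ⊆ A := fun i =>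
    ((hemb i).continuous.range_subset_closure_image_dense hDd).trans <|
      closure_minimal ((subset_iUnion (fun i => L i '' D) i).trans hDA) hA.isClosed
  have hL1 : ∀ i, L i i1 ≠ q := fun i h =>
    one_ne_zero (congrArg Subtype.val ((hemb i).injective (h.trans (hq0 i).symm)))
  obtain ⟨i, j, hij, x, hx, hxq⟩ := hA.exists_mem_inter_ne_of_isPreconnected (fun i => range (L i))
    hLA (fun i => isPreconnected_range (hemb i).continuous) (fun i => ⟨i0, hq0 i⟩)
    fun i => ⟨L i i1, mem_range_self i1, hL1 i⟩
  rw [hinter i j hij] at hx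
  exact hxq hx
end

section
/- Every countable subset of the long ray is bounded above, and consequently the long ray is ℵ₀-arc connected. -/
open Set Topology

/-- The first uncountable ordinal `ω₁`, as the type of ordinals below `(ℵ₁).ord`. -/
def Omega1 : Type 1 := {o : Ordinal // o < (Cardinal.aleph 1).ord}

noncomputable instance : LinearOrder Omega1 := by unfold Omega1; infer_instance

/-- The long ray: the lexicographic product `ω₁ ×ₗ [0,1)` with the order topology. -/
def LongRay : Type 1 := Lex (Omega1 × (Set.Ico (0:ℝ) 1))

noncomputable instance : LinearOrder LongRay := by
  unfold LongRay; exact Prod.Lex.instLinearOrder _ _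

noncomputable instance longRayTop : TopologicalSpace LongRay := Preorder.topology LongRay

instance : OrderTopology LongRay := ⟨rfl⟩

/-!
The first coordinates of a countable subset of the long ray form a countable subset of `ω₁`;
since every initial segment of `ω₁` is countable and `ω₁` is not, they all lie below some
`α < ω₁`, so the set lies below `(α, 0)`.

For the arc, choose weights `w γ > 0` on the countable set `[0, α)` with finite sum. The map
`(β, t) ↦ ∑_{γ < β} w γ + t * w β` is strictly monotone on `[(0, 0), (α, 0)]`, and it is
onto `[0, ∑ w]`: a value `y` is reached in the least `β` with `y < ∑_{γ ≤ β} w γ`. An order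
isomorphism of intervals is a homeomorphism.
-/

theorem Set.Countable.exists_summable_pos {T : Type*} {s : Set T} (hs : s.Countable) :
    ∃ w : T → ℝ, Summable w ∧ (∀ γ ∈ s, 0 < w γ) ∧ ∀ γ ∉ s, w γ = 0 := by
  have := hs.to_subtype
  obtain ⟨v, hv, c, hvc, -⟩ := NNReal.exists_pos_sum_of_countable one_ne_zero s
  refine ⟨Function.extend Subtype.val (fun γ => (v γ : ℝ)) 0,
    ((hasSum_extend_zero Subtype.val_injective).2 (NNReal.hasSum_coe.2 hvc)).summable,
    fun γ hγ => ?_, fun γ hγ => ?_⟩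
  · rw [Subtype.val_injective.extend_apply _ _ ⟨γ, hγ⟩]
    exact hv _
  · exact Function.extend_apply' _ _ _ (by simpa using hγ)

section TsumIio

variable {T : Type*} [LinearOrder T] {w : T → ℝ} {β β' : T} {y : ℝ}

noncomputable def tsumIio (w : T → ℝ) (β : T) : ℝ := ∑' γ, (Iio β).indicator w γ

theorem tsum_indicator_Iic (hw : Summable w) (β : T) :
    ∑' γ, (Iic β).indicator w γ = tsumIio w β + w β := by
  rw [← Iio_union_right, indicator_union_of_disjoint (by simp),
    (hw.indicator _).tsum_add (hw.indicator _)]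
  congr 1
  rw [tsum_eq_single β fun γ hγ => indicator_of_notMem (s := {β}) hγ w,
    indicator_of_mem (mem_singleton β)]

theorem tsumIio_add_le (hw : Summable w) (hw0 : 0 ≤ w) (h : β < β') :
    tsumIio w β + w β ≤ tsumIio w β' := by
  rw [← tsum_indicator_Iic hw]
  exact (hw.indicator _).tsum_le_tsum
    (indicator_le_indicator_of_subset (Iic_subset_Iio.2 h) hw0) (hw.indicator _)

theorem tsumIio_le_of_forall_lt (hw : Summable w) (hw0 : 0 ≤ w) (hy : 0 ≤ y)
    (h : ∀ γ < β, tsumIio w γ + w γ ≤ y) : tsumIio w β ≤ y := by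
  refine tsum_le_of_sum_le' hy fun s => ?_
  rw [Finset.sum_indicator_eq_sum_filter]
  set t := s.filter (· ∈ Iio β)
  rcases t.eq_empty_or_nonempty with he | hne
  · rw [he, Finset.sum_empty]
    exact hy
  · have hm : t.max' hne < β := (Finset.mem_filter.1 (t.max'_mem hne)).2
    calc ∑ γ ∈ t, w γ = ∑ γ ∈ t, (Iic (t.max' hne)).indicator w γ :=
          Finset.sum_congr rfl fun γ hγ => (indicator_of_mem (mem_Iic.2 (t.le_max' γ hγ)) w).symm
      _ ≤ ∑' γ, (Iic (t.max' hne)).indicator w γ :=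
          (hw.indicator _).sum_le_tsum _ fun γ _ => indicator_nonneg (fun γ _ => hw0 γ) γ
      _ = tsumIio w (t.max' hne) + w (t.max' hne) := tsum_indicator_Iic hw _
      _ ≤ y := h _ hm

theorem exists_tsumIio_le_lt [WellFoundedLT T] (hw : Summable w) (hw0 : 0 ≤ w) (hy : 0 ≤ y)
    (h : ∃ β, y < tsumIio w β + w β) :
    ∃ β, tsumIio w β ≤ y ∧ y < tsumIio w β + w β := by
  obtain ⟨β, hβ, hmin⟩ := wellFounded_lt.has_min {β | y < tsumIio w β + w β} h
  exact ⟨β, tsumIio_le_of_forall_lt hw hw0 hy fun γ hγ => not_lt.1 (hmin γ · hγ), hβ⟩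

end TsumIio

section RayCoord

variable {T : Type*} [LinearOrder T] {w : T → ℝ}

theorem lt_toLex_zero_iff {x : T ×ₗ Ico (0:ℝ) 1} {α : T} :
    x < toLex (α, 0) ↔ (ofLex x).1 < α := by
  simp [Prod.Lex.lt_iff, not_lt.2 (Set.Ico.nonneg (t := (ofLex x).2))]

theorem toLex_zero_le_iff {x : T ×ₗ Ico (0:ℝ) 1} {β : T} :
    toLex (β, 0) ≤ x ↔ β ≤ (ofLex x).1 := by
  rw [← not_lt, ← not_lt, lt_toLex_zero_iff]

noncomputable def rayCoord (w : T → ℝ) (x : T ×ₗ Ico (0:ℝ) 1) : ℝ :=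
  tsumIio w (ofLex x).1 + (ofLex x).2 * w (ofLex x).1

theorem rayCoord_lt (x : T ×ₗ Ico (0:ℝ) 1) (hx : 0 < w (ofLex x).1) :
    rayCoord w x < tsumIio w (ofLex x).1 + w (ofLex x).1 := by
  have := mul_lt_mul_of_pos_right (Set.Ico.coe_lt_one (ofLex x).2) hx
  rw [one_mul] at this
  unfold rayCoord
  linarith

theorem rayCoord_lt_rayCoord (hw : Summable w) (hw0 : 0 ≤ w) {x y : T ×ₗ Ico (0:ℝ) 1}
    (hxy : x < y) (hx : 0 < w (ofLex x).1) : rayCoord w x < rayCoord w y := by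
  rcases Prod.Lex.lt_iff.1 hxy with hlt | ⟨heq, hlt⟩
  · calc rayCoord w x < tsumIio w (ofLex x).1 + w (ofLex x).1 := rayCoord_lt x hx
      _ ≤ tsumIio w (ofLex y).1 := tsumIio_add_le hw hw0 hlt
      _ ≤ rayCoord w y :=
          le_add_of_nonneg_right (mul_nonneg (Set.Ico.coe_nonneg _) (hw0 _))
  · unfold rayCoord
    rw [heq] at hx ⊢
    linarith [mul_lt_mul_of_pos_right (Subtype.coe_lt_coe.2 hlt) hx]

theorem exists_rayCoord_eq [WellFoundedLT T] (hw : Summable w) (hw0 : 0 ≤ w) {y : ℝ}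
    (hy : 0 ≤ y) (h : ∃ β, y < tsumIio w β + w β) :
    ∃ x, 0 < w (ofLex x).1 ∧ rayCoord w x = y := by
  obtain ⟨β, hβy, hyβ⟩ := exists_tsumIio_le_lt hw hw0 hy h
  have hβ : 0 < w β := by linarith
  refine ⟨toLex (β, ⟨(y - tsumIio w β) / w β, div_nonneg (by linarith) hβ.le,
    (div_lt_one hβ).2 (by linarith)⟩), hβ, ?_⟩
  simp [rayCoord, div_mul_cancel₀ _ hβ.ne']

end RayCoord

section IccOrderIso

variable {T : Type*} [LinearOrder T] {w : T → ℝ} {β₀ α : T}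

theorem tsumIio_eq_zero {β : T} (h : ∀ γ < β, w γ = 0) : tsumIio w β = 0 := by
  rw [tsumIio, tsum_congr fun γ => indicator_apply_eq_zero.2 (h γ), tsum_zero]

@[simp]
theorem rayCoord_toLex_zero (β : T) : rayCoord w (toLex (β, 0)) = tsumIio w β := by
  simp [rayCoord]

theorem tsumIio_eq_zero_of_forall_notMem_Ico (hzero : ∀ γ ∉ Ico β₀ α, w γ = 0) :
    tsumIio w β₀ = 0 :=
  tsumIio_eq_zero fun γ hγ => hzero γ fun h => (h.1.trans_lt hγ).false

variable (hw : Summable w) (hw0 : 0 ≤ w) (hpos : ∀ γ ∈ Ico β₀ α, 0 < w γ)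
include hw hw0 hpos

theorem rayCoord_strictMonoOn :
    StrictMonoOn (rayCoord w) (Icc (toLex (β₀, 0)) (toLex (α, 0))) := by
  intro x hx y hy hxy
  exact rayCoord_lt_rayCoord hw hw0 hxy
    (hpos _ ⟨toLex_zero_le_iff.1 hx.1, lt_toLex_zero_iff.1 (hxy.trans_le hy.2)⟩)

theorem rayCoord_image_Icc [WellFoundedLT T] (hzero : ∀ γ ∉ Ico β₀ α, w γ = 0)
    (hle : β₀ ≤ α) :
    rayCoord w '' Icc (toLex (β₀, 0)) (toLex (α, 0)) = Icc 0 (tsumIio w α) := by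
  have hab : (toLex (β₀, 0) : T ×ₗ Ico (0:ℝ) 1) ≤ toLex (α, 0) := toLex_zero_le_iff.2 hle
  have hstart : rayCoord w (toLex (β₀, 0)) = 0 := by
    rw [rayCoord_toLex_zero, tsumIio_eq_zero_of_forall_notMem_Ico hzero]
  apply Subset.antisymm
  · rintro _ ⟨x, hx, rfl⟩
    have hmono := (rayCoord_strictMonoOn hw hw0 hpos).monotoneOn
    exact ⟨hstart ▸ hmono ⟨le_rfl, hab⟩ hx hx.1,
      rayCoord_toLex_zero (w := w) α ▸ hmono hx ⟨hab, le_rfl⟩ hx.2⟩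
  · rintro y ⟨hy0, hyD⟩
    rcases hyD.lt_or_eq with hyD | rfl
    · obtain ⟨x, hx, rfl⟩ := exists_rayCoord_eq hw hw0 hy0
        ⟨α, by rwa [hzero α fun h => h.2.false, add_zero]⟩
      have hxI : (ofLex x).1 ∈ Ico β₀ α := not_imp_comm.1 (hzero _) hx.ne'
      exact ⟨x, ⟨toLex_zero_le_iff.2 hxI.1, (lt_toLex_zero_iff.2 hxI.2).le⟩, rfl⟩
    · exact ⟨toLex (α, 0), ⟨hab, le_rfl⟩, rayCoord_toLex_zero α⟩

end IccOrderIso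

theorem exists_orderIso_Icc_toLex {T : Type*} [LinearOrder T] [WellFoundedLT T] {β₀ α : T}
    (hlt : β₀ < α) (hc : (Ico β₀ α).Countable) :
    ∃ D : ℝ, 0 < D ∧
      Nonempty (Icc (toLex (β₀, 0) : T ×ₗ Ico (0:ℝ) 1) (toLex (α, 0)) ≃o Icc (0:ℝ) D) := by
  obtain ⟨w, hw, hpos, hzero⟩ := hc.exists_summable_pos
  have hw0 : 0 ≤ w := fun γ => by
    by_cases hγ : γ ∈ Ico β₀ α
    exacts [(hpos γ hγ).le, (hzero γ hγ).ge]
  have hmono := rayCoord_strictMonoOn hw hw0 hpos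
  have hab : (toLex (β₀, 0) : T ×ₗ Ico (0:ℝ) 1) < toLex (α, 0) := lt_toLex_zero_iff.2 hlt
  have hD : 0 < tsumIio w α := by
    simpa [tsumIio_eq_zero_of_forall_notMem_Ico hzero] using
      hmono ⟨le_rfl, hab.le⟩ ⟨hab.le, le_rfl⟩ hab
  exact ⟨_, hD, ⟨(hmono.orderIso _ _).trans
    (OrderIso.setCongr _ _ (rayCoord_image_Icc hw hw0 hpos hzero hlt.le))⟩⟩

theorem Set.Countable.exists_forall_lt {T : Type*} [LinearOrder T] [Uncountable T]
    (hT : ∀ β : T, (Iic β).Countable) {s : Set T} (hs : s.Countable) :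
    ∃ α, ∀ β ∈ s, β < α := by
  have hU : (⋃ β ∈ s, Iic β) ≠ univ := fun h =>
    not_countable_univ (h ▸ hs.biUnion fun β _ => hT β)
  obtain ⟨α, hα⟩ := (ne_univ_iff_exists_notMem _).1 hU
  exact ⟨α, fun β hβ => not_le.1 fun h => hα (mem_biUnion hβ h)⟩

theorem Ordinal.countable_Iio_of_lt_ord_aleph_one {o : Ordinal}
    (ho : o < (Cardinal.aleph 1).ord) :
    (Iio o).Countable := by
  rw [← Cardinal.le_aleph0_iff_set_countable, Cardinal.mk_Iio_ordinal, Cardinal.lift_le_aleph0,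
    ← Cardinal.lt_aleph_one_iff, ← Cardinal.lt_ord]
  exact ho

namespace Omega1

instance : WellFoundedLT Omega1 := by unfold Omega1; infer_instance

instance : OrderBot Omega1 where
  bot := ⟨0, Cardinal.ord_pos.2 (Cardinal.aleph_pos 1)⟩
  bot_le x := show (0 : Ordinal) ≤ x.1 from zero_le

instance : Uncountable Omega1 := by
  rw [← Cardinal.aleph0_lt_mk_iff]
  change Cardinal.aleph0 < Cardinal.mk (Iio (Cardinal.aleph 1).ord)
  rw [Cardinal.mk_Iio_ordinal, Cardinal.card_ord, Cardinal.aleph0_lt_lift]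
  exact Cardinal.aleph0_lt_aleph_one

theorem countable_Iic (β : Omega1) : (Iic β).Countable := by
  have hsucc : Order.succ β.1 < (Cardinal.aleph 1).ord :=
    (Cardinal.isSuccLimit_ord (Cardinal.aleph0_le_aleph 1)).succ_lt β.2
  refine ((Ordinal.countable_Iio_of_lt_ord_aleph_one hsucc).preimage Subtype.val_injective).mono ?_
  intro γ hγ
  exact Order.lt_succ_iff.2 (show γ.1 ≤ β.1 from hγ)

end Omega1

namespace LongRay

abbrev ofOmega1 (β : Omega1) : LongRay := toLex (β, 0)

theorem exists_subset_Iio_of_countable {S : Set LongRay} (hS : S.Countable) :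
    ∃ α : Omega1, ⊥ < α ∧ S ⊆ Iio (ofOmega1 α) := by
  obtain ⟨α, hα⟩ := ((hS.image fun x : LongRay => (ofLex x).1).insert ⊥).exists_forall_lt
    Omega1.countable_Iic
  exact ⟨α, hα ⊥ (mem_insert _ _), fun x hx =>
    lt_toLex_zero_iff.2 (hα _ (mem_insert_of_mem _ (mem_image_of_mem _ hx)))⟩

theorem isArc_Icc {α : Omega1} (hα : ⊥ < α) :
    IsArc (Icc (ofOmega1 ⊥) (ofOmega1 α)) := by
  obtain ⟨D, hD, ⟨e⟩⟩ := exists_orderIso_Icc_toLex hα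
    ((Omega1.countable_Iic α).mono (Ico_subset_Iio_self.trans Iio_subset_Iic_self))
  have e' : Icc (ofOmega1 ⊥) (ofOmega1 α) ≃o Icc (0:ℝ) D := e
  exact ⟨e'.toHomeomorph.trans (iccHomeoI 0 D hD)⟩

end LongRay

/-- Every countable subset of the long ray is bounded above, and consequently
the long ray is `ℵ₀`-arc connected. -/
theorem longRay_countable_bounded_and_aleph0_ac :
    (∀ S : Set LongRay, S.Countable → ∃ b : LongRay, ∀ x ∈ S, x ≤ b) ∧
      Aleph0ArcConnected LongRay := by
  refine ⟨fun S hS => ?_, fun S hS => ?_⟩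
  · obtain ⟨α, -, hSα⟩ := LongRay.exists_subset_Iio_of_countable hS
    exact ⟨LongRay.ofOmega1 α, fun x hx => (hSα hx).le⟩
  · obtain ⟨α, hα, hSα⟩ := LongRay.exists_subset_Iio_of_countable hS
    exact ⟨_, LongRay.isArc_Icc hα, fun x hx => ⟨toLex_zero_le_iff.2 bot_le, (hSα hx).le⟩⟩
end

section
/- Let G be a finite graph containing a simple triod T = L_1 ∪ L_2 ∪ L_3 with common point q such that each L_i − {q} contains no branch points of G, and let p_i be an interior point of L_i for i = 1,2,3. Then every arc α in G containing p_1, p_2, p_3 contains q in its interior, and at least one endpoint of α lies in [q,p_1] ∪ [q,p_2] ∪ [q,p_3]. -/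
open Set Topology

open Classical
/-- A (connected, compact Hausdorff) topological finite graph structure on `X`:
finitely many arcs (edges), given as embeddings of `[0,1]`, covering `X`,
such that two distinct edges meet only in common endpoints. -/
structure TopGraph (X : Type*) [TopologicalSpace X] where
  n : ℕ
  edge : Fin n → Set.Icc (0:ℝ) 1 → X
  emb : ∀ i, Topology.IsEmbedding (edge i)
  cover : (⋃ i, Set.range (edge i)) = Set.univ
  meet : ∀ i j, i ≠ j → ∀ x ∈ Set.range (edge i) ∩ Set.range (edge j),
    (x = edge i i0 ∨ x = edge i i1) ∧ (x = edge j i0 ∨ x = edge j i1)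

/-- The degree (order) of a point of a finite graph: the number of edge-germs at it,
counted via incidences of edge endpoints.  (Points interior to an edge have order two;
they are never branch points.) -/
noncomputable def TopGraph.degree {X : Type*} [TopologicalSpace X] (G : TopGraph X) (x : X) : ℕ :=
  ∑ i : Fin G.n, ((if G.edge i i0 = x then 1 else 0) + (if G.edge i i1 = x then 1 else 0))

/-- A branch point of a finite graph is a point of order at least `3`. -/
def TopGraph.IsBranchPoint {X : Type*} [TopologicalSpace X] (G : TopGraph X) (x : X) : Prop :=
  3 ≤ G.degree x

/-!
Near a point of order at most two, a finite graph consists of two prongs (half-edges) meeting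
only at that point. The two sides of an arc through the point must run into different prongs
and then fill them, so the arc covers a neighbourhood of the point. Hence each leg `Lᵢ` is a
free arc, and a connected set that meets a leg but avoids both of its ends stays inside it.

Order `p₁, p₂, p₃` along `α` as `p_a, p_b, p_c`. Between `p_a` and `p_b`, and again between
`p_b` and `p_c`, the arc must leave the leg of `p_b`, through `q` or through its far end; it
cannot use the far end twice, so it meets `q` strictly inside, say after `p_b`. Before reaching
`q` it leaves the leg of `p_a` through the far end, so its initial piece lies in that leg and,
after passing `p_a`, sweeps out the whole part of the leg beyond `p_a`. Therefore `α` starts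
on `[q, p_a]`.
-/

open Filter Function
open scoped unitInterval

@[simp] theorem i1_eq_one : i1 = (1 : I) := rfl

namespace unitInterval

theorem exists_Icc_subset_of_mem_nhds {t : I} (ht0 : 0 < t) (ht1 : t < 1)
    {s : Set I} (hs : s ∈ 𝓝 t) : ∃ a b, a < t ∧ t < b ∧ Icc a b ⊆ s := by
  obtain ⟨l, u, ⟨hlt, htu⟩, hlu⟩ := (mem_nhds_iff_exists_Ioo_subset' ⟨0, ht0⟩ ⟨1, ht1⟩).1 hs
  obtain ⟨a, hla, hat⟩ := exists_between hlt
  obtain ⟨b, htb, hbu⟩ := exists_between htu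
  exact ⟨a, b, hat, htb, (Icc_subset_Ioo hla hbu).trans hlu⟩

-- `reflectIf b` reparametrizes an edge so that it starts at its `b`-end.
def reflectIf (b : Bool) : I ≃ₜ I :=
  cond b symmHomeomorph (Homeomorph.refl I)

theorem reflectIf_injective_zero {b b' : Bool} (h : reflectIf b 0 = reflectIf b' 0) : b = b' := by
  cases b <;> cases b' <;> simp_all [reflectIf]

theorem reflectIf_eq_zero_or_one {b : Bool} {a : I} :
    reflectIf b a = 0 ∨ reflectIf b a = 1 ↔ a = 0 ∨ a = 1 := by
  cases b <;> simp [reflectIf, symm_eq_zero, symm_eq_one, or_comm]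

end unitInterval

theorem Function.Injective.image_Icc_nontrivial {α β : Type*} [LinearOrder α] {f : α → β}
    (hf : Injective f) {a b : α} (hab : a < b) : (f '' Icc a b).Nontrivial :=
  ⟨f a, mem_image_of_mem f (left_mem_Icc.2 hab.le), f b,
    mem_image_of_mem f (right_mem_Icc.2 hab.le), hf.ne hab.ne⟩

section Arcs

variable {X : Type*} [TopologicalSpace X] {L : I → X} {t : I}

theorem Topology.IsEmbedding.image_Icc_sdiff_right_isPreconnected (hL : IsEmbedding L) (a : I) :
    IsPreconnected (L '' Icc a t \ {L t}) := by
  rw [← image_singleton, ← image_sdiff hL.injective, Icc_sdiff_right]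
  exact isPreconnected_Ico.image _ hL.continuous.continuousOn

theorem Topology.IsEmbedding.image_Icc_sdiff_left_isPreconnected (hL : IsEmbedding L) (b : I) :
    IsPreconnected (L '' Icc t b \ {L t}) := by
  rw [← image_singleton, ← image_sdiff hL.injective, Icc_sdiff_left]
  exact isPreconnected_Ioc.image _ hL.continuous.continuousOn

theorem IsPreconnected.subset_or_subset_of_inter_subset_singleton {S P₁ P₂ : Set X} {x : X}
    (hS : IsPreconnected (S \ {x})) (hP₁ : IsClosed P₁) (hP₂ : IsClosed P₂) (hP : P₁ ∩ P₂ ⊆ {x})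
    (hx₁ : x ∈ P₁) (hx₂ : x ∈ P₂)
    (hSP : S ⊆ P₁ ∪ P₂) : S ⊆ P₁ ∨ S ⊆ P₂ := by
  have hcover : S \ {x} ⊆ P₂ᶜ ∪ P₁ᶜ := fun y hy => by
    by_contra h
    simp only [mem_union, mem_compl_iff, not_or, not_not] at h
    exact hy.2 (hP ⟨h.2, h.1⟩)
  have hdisj : S \ {x} ∩ (P₂ᶜ ∩ P₁ᶜ) = ∅ := by
    ext y
    simp only [mem_inter_iff, mem_compl_iff, mem_empty_iff_false, iff_false]
    rintro ⟨hy, hy₂, hy₁⟩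
    exact (hSP hy.1).elim hy₁ hy₂
  have hinsert : ∀ P, x ∈ P → S \ {x} ⊆ P → S ⊆ P := fun P hxP h y hy =>
    if hyx : y = x then hyx ▸ hxP else h ⟨hy, hyx⟩
  rcases isPreconnected_iff_subset_of_disjoint.1 hS _ _ hP₂.isOpen_compl hP₁.isOpen_compl hcover
    hdisj with h | h
  · exact .inl <| hinsert P₁ hx₁ fun y hy => (hSP hy.1).resolve_right (h hy)
  · exact .inr <| hinsert P₂ hx₂ fun y hy => (hSP hy.1).resolve_left (h hy)

end Arcs

section ArcsT2

variable {X : Type*} [TopologicalSpace X] [T2Space X] {ψ L : I → X} {t : I}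

theorem Topology.IsEmbedding.image_Icc_subset_of_isPreconnected (hψ : IsEmbedding ψ)
    {B : Set X} (hB : IsPreconnected B) (hBψ : B ⊆ range ψ) {a b : I}
    (ha : ψ a ∈ B) (hb : ψ b ∈ B) : ψ '' Icc a b ⊆ B :=
  image_subset_iff.2 <|
    (hB.preimage_of_isClosedMap hψ.injective hψ.continuous.isClosedMap hBψ).Icc_subset ha hb

theorem Topology.IsEmbedding.exists_image_Icc_subset (hψ : IsEmbedding ψ) {B : Set X}
    (hB : IsPreconnected B) {v : I} (hBψ : B ⊆ ψ '' Ici v) (hv : ψ v ∈ B)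
    (hBnt : B.Nontrivial) : ∃ c, v < c ∧ ψ '' Icc v c ⊆ B := by
  obtain ⟨y, hy, hyv⟩ := hBnt.exists_ne (ψ v)
  obtain ⟨c, hvc, rfl⟩ := hBψ hy
  exact ⟨c, hvc.lt_of_ne (by rintro rfl; exact hyv rfl),
    hψ.image_Icc_subset_of_isPreconnected hB (hBψ.trans (image_subset_range _ _)) hv hy⟩

theorem Topology.IsEmbedding.inter_nontrivial (hψ : IsEmbedding ψ) {B₁ B₂ : Set X} {v : I}
    (hB₁ : IsPreconnected B₁) (hB₂ : IsPreconnected B₂) (hB₁ψ : B₁ ⊆ ψ '' Ici v)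
    (hB₂ψ : B₂ ⊆ ψ '' Ici v) (hv₁ : ψ v ∈ B₁) (hv₂ : ψ v ∈ B₂) (hnt₁ : B₁.Nontrivial)
    (hnt₂ : B₂.Nontrivial) : (B₁ ∩ B₂).Nontrivial := by
  obtain ⟨c₁, hc₁, h₁⟩ := hψ.exists_image_Icc_subset hB₁ hB₁ψ hv₁ hnt₁
  obtain ⟨c₂, hc₂, h₂⟩ := hψ.exists_image_Icc_subset hB₂ hB₂ψ hv₂ hnt₂
  have hm : min c₁ c₂ ∈ Icc v c₁ ∩ Icc v c₂ :=
    ⟨⟨le_min hc₁.le hc₂.le, min_le_left _ _⟩, ⟨le_min hc₁.le hc₂.le, min_le_right _ _⟩⟩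
  exact ⟨ψ v, ⟨hv₁, hv₂⟩, ψ (min c₁ c₂),
    ⟨h₁ (mem_image_of_mem ψ hm.1), h₂ (mem_image_of_mem ψ hm.2)⟩,
    hψ.injective.ne (lt_min hc₁ hc₂).ne⟩

theorem Topology.IsEmbedding.not_sides_subset_image_Ici (hL : IsEmbedding L) (hψ : IsEmbedding ψ)
    {a b v : I} (hat : a < t) (htb : t < b) (hv : ψ v = L t)
    (h₁ : L '' Icc a t ⊆ ψ '' Ici v) (h₂ : L '' Icc t b ⊆ ψ '' Ici v) : False := by
  have hmeet : L '' Icc a t ∩ L '' Icc t b = {ψ v} := by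
    rw [← image_inter hL.injective, Icc_inter_Icc_eq_singleton hat.le htb.le, image_singleton, hv]
  have := hψ.inter_nontrivial (isPreconnected_Icc.image _ hL.continuous.continuousOn)
    (isPreconnected_Icc.image _ hL.continuous.continuousOn) h₁ h₂
    (hv ▸ mem_image_of_mem L (right_mem_Icc.2 hat.le))
    (hv ▸ mem_image_of_mem L (left_mem_Icc.2 htb.le))
    (hL.injective.image_Icc_nontrivial hat) (hL.injective.image_Icc_nontrivial htb)
  rw [hmeet] at this
  exact not_nontrivial_singleton this

theorem Topology.IsEmbedding.exists_image_Icc_subset_range (hL : IsEmbedding L)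
    (hψ : IsEmbedding ψ) {a b v : I} (hab : a < b) (hsub : L '' Icc a b ⊆ ψ '' Ici v)
    (hv : ψ v ∈ L '' Icc a b) : ∃ c, v < c ∧ ψ '' Icc v c ⊆ range L := by
  obtain ⟨c, hvc, hc⟩ := hψ.exists_image_Icc_subset
    (isPreconnected_Icc.image _ hL.continuous.continuousOn) hsub hv
    (hL.injective.image_Icc_nontrivial hab)
  exact ⟨c, hvc, hc.trans (image_subset_range _ _)⟩

theorem Topology.IsEmbedding.image_Ici_notMem_nhds (hL : IsEmbedding L) (ht0 : 0 < t)
    (ht1 : t < 1) (hψ : IsEmbedding ψ) {v : I} (hv : ψ v = L t) :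
    ψ '' Ici v ∉ 𝓝 (L t) := fun hP => by
  obtain ⟨a, b, hat, htb, hab⟩ := unitInterval.exists_Icc_subset_of_mem_nhds ht0 ht1
    (hL.continuous.continuousAt.preimage_mem_nhds hP)
  rw [← image_subset_iff] at hab
  exact hL.not_sides_subset_image_Ici hψ hat htb hv
    ((image_mono (Icc_subset_Icc_right htb.le)).trans hab)
    ((image_mono (Icc_subset_Icc_left hat.le)).trans hab)

theorem Topology.IsEmbedding.range_mem_nhds_of_prongs (hL : IsEmbedding L) (ht0 : 0 < t)
    (ht1 : t < 1) {ψ₁ ψ₂ : I → X} (hψ₁ : IsEmbedding ψ₁) (hψ₂ : IsEmbedding ψ₂)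
    {v₁ v₂ c₁ c₂ : I} (hv₁ : ψ₁ v₁ = L t) (hv₂ : ψ₂ v₂ = L t) (hc₁ : v₁ < c₁) (hc₂ : v₂ < c₂)
    (hdisj : ψ₁ '' Icc v₁ c₁ ∩ ψ₂ '' Icc v₂ c₂ ⊆ {L t})
    (hnhds : ∀ d₁ d₂, v₁ < d₁ → v₂ < d₂ → ψ₁ '' Icc v₁ d₁ ∪ ψ₂ '' Icc v₂ d₂ ∈ 𝓝 (L t)) :
    range L ∈ 𝓝 (L t) := by
  set P₁ := ψ₁ '' Icc v₁ c₁
  set P₂ := ψ₂ '' Icc v₂ c₂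
  obtain ⟨a, b, hat, htb, hab⟩ := unitInterval.exists_Icc_subset_of_mem_nhds ht0 ht1
    (hL.continuous.continuousAt.preimage_mem_nhds (hnhds c₁ c₂ hc₁ hc₂))
  rw [← image_subset_iff] at hab
  have hx₁ : L t ∈ P₁ := hv₁ ▸ mem_image_of_mem ψ₁ (left_mem_Icc.2 hc₁.le)
  have hx₂ : L t ∈ P₂ := hv₂ ▸ mem_image_of_mem ψ₂ (left_mem_Icc.2 hc₂.le)
  have hP₁ : P₁ ⊆ ψ₁ '' Ici v₁ := image_mono Icc_subset_Ici_self
  have hP₂ : P₂ ⊆ ψ₂ '' Ici v₂ := image_mono Icc_subset_Ici_self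
  have hsplit := fun S (hS : IsPreconnected (S \ {L t})) (hSab : S ⊆ L '' Icc a b) =>
    hS.subset_or_subset_of_inter_subset_singleton
      ((isCompact_Icc.image hψ₁.continuous).isClosed)
      ((isCompact_Icc.image hψ₂.continuous).isClosed) hdisj hx₁ hx₂ (hSab.trans hab)
  have hleft : L t ∈ L '' Icc a t := mem_image_of_mem L (right_mem_Icc.2 hat.le)
  have hright : L t ∈ L '' Icc t b := mem_image_of_mem L (left_mem_Icc.2 htb.le)
  -- Each side of `L` at `L t` runs into one of the half-arcs, and not both into the same one.
  rcases hsplit _ (hL.image_Icc_sdiff_right_isPreconnected a)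
      (image_mono (Icc_subset_Icc_right htb.le)) with h₁ | h₁ <;>
    rcases hsplit _ (hL.image_Icc_sdiff_left_isPreconnected b)
      (image_mono (Icc_subset_Icc_left hat.le)) with h₂ | h₂
  · exact (hL.not_sides_subset_image_Ici hψ₁ hat htb hv₁ (h₁.trans hP₁) (h₂.trans hP₁)).elim
  · obtain ⟨d₁, hd₁, hd₁L⟩ :=
      hL.exists_image_Icc_subset_range hψ₁ hat (h₁.trans hP₁) (hv₁ ▸ hleft)
    obtain ⟨d₂, hd₂, hd₂L⟩ :=
      hL.exists_image_Icc_subset_range hψ₂ htb (h₂.trans hP₂) (hv₂ ▸ hright)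
    exact mem_of_superset (hnhds d₁ d₂ hd₁ hd₂) (union_subset hd₁L hd₂L)
  · obtain ⟨d₂, hd₂, hd₂L⟩ :=
      hL.exists_image_Icc_subset_range hψ₂ hat (h₁.trans hP₂) (hv₂ ▸ hleft)
    obtain ⟨d₁, hd₁, hd₁L⟩ :=
      hL.exists_image_Icc_subset_range hψ₁ htb (h₂.trans hP₁) (hv₁ ▸ hright)
    exact mem_of_superset (hnhds d₁ d₂ hd₁ hd₂) (union_subset hd₁L hd₂L)
  · exact (hL.not_sides_subset_image_Ici hψ₂ hat htb hv₂ (h₁.trans hP₂) (h₂.trans hP₂)).elim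

end ArcsT2

namespace TopGraph

open unitInterval

variable {X : Type*} [TopologicalSpace X] (G : TopGraph X)

noncomputable def ends (x : X) : Finset (Fin G.n × Bool) :=
  {jb | G.edge jb.1 (reflectIf jb.2 0) = x}

theorem mem_ends {x : X} {jb : Fin G.n × Bool} :
    jb ∈ G.ends x ↔ G.edge jb.1 (reflectIf jb.2 0) = x := by
  simp [ends]

theorem card_ends (x : X) : (G.ends x).card = G.degree x := by
  rw [ends, Finset.card_filter, degree, Fintype.sum_prod_type]
  refine Finset.sum_congr rfl fun j _ => ?_
  simp only [Fintype.sum_bool, reflectIf, cond_true, cond_false, symmHomeomorph_apply, symm_zero,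
    Homeomorph.refl_apply, id_eq, add_comm]
  congr

theorem isEmbedding_edge_comp_reflectIf (j : Fin G.n) (b : Bool) :
    IsEmbedding (G.edge j ∘ reflectIf b) :=
  (G.emb j).comp (reflectIf b).isEmbedding

theorem preimage_image_edge_comp_reflectIf_mem_nhds (j : Fin G.n) (b : Bool) {d : I}
    (hd : 0 < d) : G.edge j ⁻¹' ((G.edge j ∘ reflectIf b) '' Icc 0 d) ∈ 𝓝 (reflectIf b 0) := by
  rw [image_comp, preimage_image_eq _ (G.emb j).injective]
  exact (reflectIf b).isOpenMap.image_mem_nhds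
    (mem_of_superset (Iio_mem_nhds hd) fun y hy => ⟨nonneg', le_of_lt hy⟩)

section T2

variable [T2Space X]

theorem mem_nhds_of_forall_edge {x : X} {T : Set X}
    (h : ∀ j v, G.edge j v = x → G.edge j ⁻¹' T ∈ 𝓝 v) : T ∈ 𝓝 x := by
  rw [← nhdsWithin_univ, ← G.cover, nhdsWithin_iUnion, mem_iSup]
  intro j
  by_cases hx : x ∈ range (G.edge j)
  · obtain ⟨v, rfl⟩ := hx
    rw [← (G.emb j).map_nhds_eq]
    exact h j v rfl
  · have hclosed : IsClosed (range (G.edge j)) :=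
      (isCompact_range (G.emb j).continuous).isClosed
    exact mem_of_superset (inter_mem_nhdsWithin _ (hclosed.isOpen_compl.mem_nhds hx))
      fun y hy => (hy.2 hy.1).elim

-- At a point interior to an edge, the two halves of that edge are the two prongs.
theorem range_mem_nhds_of_ends_eq_empty {L : I → X} (hL : IsEmbedding L) {t : I}
    (ht0 : 0 < t) (ht1 : t < 1) (h : G.ends (L t) = ∅) : range L ∈ 𝓝 (L t) := by
  have hnot : ∀ j b, G.edge j (reflectIf b 0) ≠ L t := fun j b hjb =>
    Finset.notMem_empty (j, b) (h ▸ (G.mem_ends).2 hjb)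
  obtain ⟨j, v, hv⟩ := mem_iUnion.1 (G.cover.symm ▸ mem_univ (L t))
  have hv0 : v ≠ 0 := by rintro rfl; exact hnot j false hv
  have hv1 : v ≠ 1 := by rintro rfl; exact hnot j true (by simpa [reflectIf] using hv)
  have honly : ∀ k w, G.edge k w = L t → k = j ∧ w = v := by
    intro k w hkw
    by_cases hkj : k = j
    · subst hkj; exact ⟨rfl, (G.emb k).injective (hkw.trans hv.symm)⟩
    · rcases (G.meet k j hkj _ ⟨⟨w, hkw⟩, ⟨v, hv⟩⟩).2 with h0 | h1
      · exact (hnot j false h0.symm).elim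
      · exact (hnot j true (by simpa [reflectIf] using h1.symm)).elim
  have hemb := G.emb j
  refine hL.range_mem_nhds_of_prongs ht0 ht1 hemb (hemb.comp symmHomeomorph.isEmbedding)
    (v₂ := σ v) (c₁ := 1) (c₂ := 1) hv (by simpa using hv) (lt_of_le_of_ne le_one' hv1)
    (lt_of_le_of_ne le_one' (by simpa [symm_eq_one] using hv0)) ?_ ?_
  · rintro _ ⟨⟨a, ha, rfl⟩, ⟨b, hb, hab⟩⟩
    have hab : σ b = a := hemb.injective hab
    have : a = v := le_antisymm (hab ▸ symm_le_comm.1 hb.1) ha.1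
    rw [this, hv]; rfl
  · intro d₁ d₂ hd₁ hd₂
    refine G.mem_nhds_of_forall_edge fun k w hkw => ?_
    obtain ⟨rfl, rfl⟩ := honly k w hkw
    refine mem_of_superset (Icc_mem_nhds (symm_lt_comm.1 hd₂) hd₁) fun y hy => ?_
    rcases le_total w y with hwy | hyw
    · exact .inl ⟨y, ⟨hwy, hy.2⟩, rfl⟩
    · exact .inr ⟨σ y, ⟨symm_le_symm.2 hyw, symm_le_comm.1 hy.1⟩, by simp⟩

theorem mem_nhds_of_forall_ends {x : X} {T : Set X} (hx : (G.ends x).Nonempty)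
    (h : ∀ jb ∈ G.ends x, G.edge jb.1 ⁻¹' T ∈ 𝓝 (reflectIf jb.2 0)) : T ∈ 𝓝 x := by
  obtain ⟨⟨j, b⟩, hjb⟩ := hx
  rw [mem_ends] at hjb
  refine G.mem_nhds_of_forall_edge fun k w hkw => ?_
  have hend : ∀ b', G.edge k (reflectIf b' 0) = x → reflectIf b' 0 = w := fun b' hb' =>
    (G.emb k).injective (hb'.trans hkw.symm)
  by_cases hkj : k = j
  · subst hkj
    exact hend b hjb ▸ h (k, b) ((G.mem_ends).2 hjb)
  · rcases (G.meet k j hkj x ⟨⟨w, hkw⟩, ⟨_, hjb⟩⟩).1 with h0 | h1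
    · have h0 : G.edge k (reflectIf false 0) = x := h0.symm
      exact hend false h0 ▸ h (k, false) ((G.mem_ends).2 h0)
    · have h1 : G.edge k (reflectIf true 0) = x := by simpa [reflectIf] using h1.symm
      exact hend true h1 ▸ h (k, true) ((G.mem_ends).2 h1)

-- A single edge-end at a point gives a single prong, which an arc through the point cannot
-- fill from both sides.
theorem ends_ne_singleton {L : I → X} (hL : IsEmbedding L) {t : I} (ht0 : 0 < t) (ht1 : t < 1)
    (jb : Fin G.n × Bool) : G.ends (L t) ≠ {jb} := fun h => by
  have hjb : jb ∈ G.ends (L t) := h ▸ Finset.mem_singleton_self jb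
  refine hL.image_Ici_notMem_nhds ht0 ht1 (G.isEmbedding_edge_comp_reflectIf jb.1 jb.2)
    ((G.mem_ends).1 hjb) (G.mem_nhds_of_forall_ends ⟨jb, hjb⟩ fun jb' hjb' => ?_)
  rw [h, Finset.mem_singleton] at hjb'
  rw [hjb']
  exact mem_of_superset (G.preimage_image_edge_comp_reflectIf_mem_nhds jb.1 jb.2 zero_lt_one)
    (preimage_mono (image_mono Icc_subset_Ici_self))

theorem range_mem_nhds_of_ends_eq_pair {L : I → X} (hL : IsEmbedding L) {t : I} (ht0 : 0 < t)
    (ht1 : t < 1) {jb₁ jb₂ : Fin G.n × Bool} (hne : jb₁ ≠ jb₂)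
    (h : G.ends (L t) = {jb₁, jb₂}) : range L ∈ 𝓝 (L t) := by
  rcases jb₁ with ⟨j₁, b₁⟩
  rcases jb₂ with ⟨j₂, b₂⟩
  have h₁ : G.edge j₁ (reflectIf b₁ 0) = L t := (G.mem_ends (jb := (j₁, b₁))).1 (by simp [h])
  have h₂ : G.edge j₂ (reflectIf b₂ 0) = L t := (G.mem_ends (jb := (j₂, b₂))).1 (by simp [h])
  have hj : j₁ ≠ j₂ := by
    rintro rfl
    exact hne (by rw [reflectIf_injective_zero ((G.emb j₁).injective (h₁.trans h₂.symm))])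
  obtain ⟨c, hc0, hc1⟩ := exists_between (zero_lt_one' I)
  refine hL.range_mem_nhds_of_prongs ht0 ht1 (G.isEmbedding_edge_comp_reflectIf j₁ b₁)
    (G.isEmbedding_edge_comp_reflectIf j₂ b₂) h₁ h₂ hc0 hc0 ?_ fun d₁ d₂ hd₁ hd₂ => ?_
  · -- Near `L t` the two edges can only meet at a common endpoint, which must be `L t`.
    rintro _ ⟨⟨a, ha, rfl⟩, ⟨a', -, ha'⟩⟩
    have ha01 : reflectIf b₁ a = 0 ∨ reflectIf b₁ a = 1 := by
      rcases (G.meet j₁ j₂ hj _ ⟨⟨_, rfl⟩, ⟨_, ha'⟩⟩).1 with hend | hend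
      · exact .inl ((G.emb j₁).injective hend)
      · exact .inr ((G.emb j₁).injective hend)
    rw [(reflectIf_eq_zero_or_one.1 ha01).resolve_right (ha.2.trans_lt hc1).ne]
    exact h₁
  · refine G.mem_nhds_of_forall_ends (h ▸ Finset.insert_nonempty _ _) fun jb hjb => ?_
    rw [h, Finset.mem_insert, Finset.mem_singleton] at hjb
    rcases hjb with rfl | rfl
    · exact mem_of_superset (G.preimage_image_edge_comp_reflectIf_mem_nhds j₁ b₁ hd₁)
        (preimage_mono subset_union_left)
    · exact mem_of_superset (G.preimage_image_edge_comp_reflectIf_mem_nhds j₂ b₂ hd₂)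
        (preimage_mono subset_union_right)

theorem range_mem_nhds_of_degree_le_two {L : I → X} (hL : IsEmbedding L) {t : I} (ht0 : 0 < t)
    (ht1 : t < 1) (hdeg : G.degree (L t) ≤ 2) : range L ∈ 𝓝 (L t) := by
  rw [← G.card_ends] at hdeg
  interval_cases hcard : (G.ends (L t)).card
  · exact G.range_mem_nhds_of_ends_eq_empty hL ht0 ht1 (Finset.card_eq_zero.1 hcard)
  · obtain ⟨jb, hjb⟩ := Finset.card_eq_one.1 hcard
    exact (G.ends_ne_singleton hL ht0 ht1 jb hjb).elim
  · obtain ⟨jb₁, jb₂, hne, hjb⟩ := Finset.card_eq_two.1 hcard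
    exact G.range_mem_nhds_of_ends_eq_pair hL ht0 ht1 hne hjb

end T2

end TopGraph

section FreeArcs

variable {X : Type*} [TopologicalSpace X]

/-- A free arc: an arc whose interior `L '' Ioo 0 1` is open in `X` (stated pointwise). -/
def IsFreeArc (L : I → X) : Prop :=
  IsEmbedding L ∧ ∀ t, 0 < t → t < 1 → range L ∈ 𝓝 (L t)

theorem TopGraph.isFreeArc [T2Space X] (G : TopGraph X) {L : I → X} (hL : IsEmbedding L)
    (hdeg : ∀ t, 0 < t → t < 1 → G.degree (L t) ≤ 2) : IsFreeArc L :=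
  ⟨hL, fun t ht0 ht1 => G.range_mem_nhds_of_degree_le_two hL ht0 ht1 (hdeg t ht0 ht1)⟩

variable {L La Lb Lc α : I → X} {q : X}

theorem IsFreeArc.apply_notMem_range (ha : IsFreeArc La) (hqa : La 0 = q)
    (hab : range La ∩ range Lb ⊆ {q}) {ta : I} (hta : 0 < ta) : La ta ∉ range Lb := fun h =>
  hta.ne' (ha.1.injective ((hab ⟨⟨ta, rfl⟩, h⟩).trans hqa.symm))

variable [T2Space X]

theorem IsFreeArc.subset_range (hL : IsFreeArc L) {S : Set X} (hS : IsPreconnected S)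
    (hSL : (S ∩ range L).Nonempty) (h0 : L 0 ∉ S) (h1 : L 1 ∉ S) : S ⊆ range L := by
  have hint : S ∩ range L ⊆ interior (range L) := by
    rintro _ ⟨hy, s, rfl⟩
    refine mem_interior_iff_mem_nhds.2 (hL.2 s ?_ ?_)
    · exact lt_of_le_of_ne unitInterval.nonneg' (by rintro rfl; exact h0 hy)
    · exact lt_of_le_of_ne unitInterval.le_one' (by rintro rfl; exact h1 hy)
  refine (hS.subset_left_of_subset_union isOpen_interior
    (isCompact_range hL.1.continuous).isClosed.isOpen_compl ?_ ?_ ?_).trans interior_subset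
  · exact disjoint_compl_right.mono_left interior_subset
  · exact fun y hy => (Classical.em (y ∈ range L)).imp (fun h => hint ⟨hy, h⟩) id
  · obtain ⟨y, hy⟩ := hSL
    exact ⟨y, hy.1, hint hy⟩

theorem IsFreeArc.apply_zero_mem_image_Iic (ha : IsFreeArc La) (hb : IsFreeArc Lb)
    (hqa : La 0 = q) (hqb : Lb 0 = q) (hab : range La ∩ range Lb ⊆ {q}) {ta : I}
    (hta : ta ∈ Ioo 0 1) (hα : IsEmbedding α) {sa sb w : I} (hsab : sa < sb) (hsbw : sb < w)
    (hsa : α sa = La ta) (hsb : α sb ∈ range Lb) (hw : α w = q) : α 0 ∈ La '' Iic ta := by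
  have hpre : ∀ a b, IsPreconnected (α '' Icc a b) := fun a b =>
    isPreconnected_Icc.image _ hα.continuous.continuousOn
  have hnotq : ∀ {A : Set I}, w ∉ A → q ∉ α '' A := fun h => by
    rwa [← hw, hα.injective.mem_set_image]
  have hb1 : Lb 1 ∉ range La := fun h =>
    one_ne_zero (hb.1.injective ((hab ⟨h, 1, rfl⟩).trans hqb.symm))
  have hsa_b : α sa ∉ range Lb := hsa ▸ ha.apply_notMem_range hqa hab hta.1
  -- Between `La ta` and `Lb`, the arc leaves `La` through `La 1` and enters `Lb` through `Lb 1`.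
  obtain ⟨u, hu, hu1⟩ : Lb 1 ∈ α '' Icc sa sb := by
    by_contra h
    exact hsa_b (hb.subset_range (hpre sa sb) ⟨_, mem_image_of_mem α
      (right_mem_Icc.2 hsab.le), hsb⟩ (hqb ▸ hnotq fun h => hsbw.not_ge h.2) h
      (mem_image_of_mem α (left_mem_Icc.2 hsab.le)))
  obtain ⟨x, hx, hx1⟩ : La 1 ∈ α '' Icc sa u := by
    by_contra h
    have hsub := ha.subset_range (hpre sa u) ⟨_, mem_image_of_mem α (left_mem_Icc.2 hu.1),
      ⟨ta, hsa.symm⟩⟩ (hqa ▸ hnotq fun h => (hu.2.trans_lt hsbw).not_ge h.2) h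
    exact hb1 (hu1 ▸ hsub (mem_image_of_mem α (right_mem_Icc.2 hu.1)))
  have hsax : sa < x := lt_of_le_of_ne hx.1 fun h =>
    hta.2.ne (ha.1.injective (by rw [← hsa, h, hx1]))
  have hαLa : α '' Icc 0 x ⊆ range La := by
    have hIco : α '' Ico 0 x ⊆ range La := by
      refine ha.subset_range (isPreconnected_Ico.image _ hα.continuous.continuousOn)
        ⟨_, mem_image_of_mem α ⟨unitInterval.nonneg', hsax⟩, ⟨ta, hsa.symm⟩⟩
        (hqa ▸ hnotq fun h => (hx.2.trans_lt (hu.2.trans_lt hsbw)).not_gt h.2) ?_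
      rw [← hx1, hα.injective.mem_set_image]
      exact fun h => lt_irrefl x h.2
    rw [← Ico_insert_right unitInterval.nonneg', image_insert_eq]
    exact insert_subset ⟨1, hx1.symm⟩ hIco
  -- After time `sa` the arc sweeps out `La '' Icc ta 1`, so it cannot start there.
  have hcover : La '' Icc ta 1 ⊆ α '' Icc sa x :=
    ha.1.image_Icc_subset_of_isPreconnected (hpre sa x)
      ((image_mono (Icc_subset_Icc_left unitInterval.nonneg')).trans hαLa)
      (hsa ▸ mem_image_of_mem α (left_mem_Icc.2 hsax.le))
      (hx1 ▸ mem_image_of_mem α (right_mem_Icc.2 hsax.le))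
  obtain ⟨τ, hτ⟩ := hαLa (mem_image_of_mem α (left_mem_Icc.2 unitInterval.nonneg'))
  refine ⟨τ, show τ ≤ ta from not_lt.1 fun hτ' => ?_, hτ⟩
  obtain ⟨z, hz, hzτ⟩ := hcover ⟨τ, ⟨hτ'.le, unitInterval.le_one'⟩, rfl⟩
  have hz0 : z = 0 := hα.injective (hzτ.trans hτ)
  have hsa0 : sa = 0 := le_antisymm (hz0 ▸ hz.1) unitInterval.nonneg'
  exact hτ'.ne (ha.1.injective (by rw [← hsa, hsa0, hτ]))

theorem IsFreeArc.apply_one_mem_image_Iic (ha : IsFreeArc La) (hb : IsFreeArc Lb)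
    (hqa : La 0 = q) (hqb : Lb 0 = q) (hab : range La ∩ range Lb ⊆ {q}) {ta : I}
    (hta : ta ∈ Ioo 0 1) (hα : IsEmbedding α) {sa sb w : I} (hwsb : w < sb) (hsba : sb < sa)
    (hsa : α sa = La ta) (hsb : α sb ∈ range Lb) (hw : α w = q) : α 1 ∈ La '' Iic ta := by
  simpa using ha.apply_zero_mem_image_Iic hb hqa hqb hab hta
    (hα.comp unitInterval.symmHomeomorph.isEmbedding) (unitInterval.symm_lt_symm.2 hsba)
    (unitInterval.symm_lt_symm.2 hwsb) (sa := σ sa) (sb := σ sb) (w := σ w)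
    (by simpa using hsa) (by simpa using hsb) (by simpa using hw)

theorem IsFreeArc.exists_apply_eq_of_lt_of_lt (hb : IsFreeArc Lb) (hqb : Lb 0 = q)
    (hα : IsEmbedding α) {x y z : I} (hxy : x < y) (hyz : y < z) (hx : α x ∉ range Lb)
    (hz : α z ∉ range Lb) (hy : α y ∈ Lb '' Ioo 0 1) :
    ∃ w, (x < w ∧ w < y ∨ y < w ∧ w < z) ∧ α w = q := by
  have hexit : ∀ {a b c}, y ∈ Icc a b → c ∈ Icc a b → α c ∉ range Lb →
      q ∈ α '' Icc a b ∨ Lb 1 ∈ α '' Icc a b := fun hya hc hcL => by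
    by_contra h
    rw [not_or] at h
    exact hcL (hb.subset_range (isPreconnected_Icc.image _ hα.continuous.continuousOn)
      ⟨_, mem_image_of_mem α hya, image_subset_range _ _ hy⟩ (hqb ▸ h.1) h.2
      (mem_image_of_mem α hc))
  obtain ⟨s, hs, hsy⟩ := hy
  have hyq : α y ≠ q := hsy ▸ fun h => hs.1.ne' (hb.1.injective (h.trans hqb.symm))
  have hy1 : α y ≠ Lb 1 := hsy ▸ fun h => hs.2.ne (hb.1.injective h)
  have hoff : ∀ {a}, α a ∉ range Lb → α a ≠ q := fun ha h => ha ⟨0, hqb.trans h.symm⟩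
  rcases hexit ⟨hxy.le, le_rfl⟩ (left_mem_Icc.2 hxy.le) hx with ⟨u, hu, huq⟩ | ⟨u, hu, hu1⟩
  · refine ⟨u, .inl ⟨lt_of_le_of_ne hu.1 ?_, lt_of_le_of_ne hu.2 ?_⟩, huq⟩
    · rintro rfl; exact hoff hx huq
    · rintro rfl; exact hyq huq
  rcases hexit ⟨le_rfl, hyz.le⟩ (right_mem_Icc.2 hyz.le) hz with ⟨v, hv, hvq⟩ | ⟨v, hv, hv1⟩
  · refine ⟨v, .inr ⟨lt_of_le_of_ne hv.1 ?_, lt_of_le_of_ne hv.2 ?_⟩, hvq⟩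
    · rintro rfl; exact hyq hvq
    · rintro rfl; exact hoff hz hvq
  -- Otherwise `α` would pass through `Lb 1` both before and after `y`.
  have huv : u = v := hα.injective (hu1.trans hv1.symm)
  exact (hy1 (le_antisymm hu.2 (huv ▸ hv.1) ▸ hu1)).elim

theorem IsFreeArc.triod_of_lt_of_lt (ha : IsFreeArc La) (hb : IsFreeArc Lb) (hc : IsFreeArc Lc)
    (hqa : La 0 = q) (hqb : Lb 0 = q) (hqc : Lc 0 = q) (hab : range La ∩ range Lb ⊆ {q})
    (hcb : range Lc ∩ range Lb ⊆ {q}) {ta tb tc : I} (hta : ta ∈ Ioo 0 1) (htb : tb ∈ Ioo 0 1)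
    (htc : tc ∈ Ioo 0 1) (hα : IsEmbedding α) {sa sb sc : I} (hsab : sa < sb) (hsbc : sb < sc)
    (hsa : α sa = La ta) (hsb : α sb = Lb tb) (hsc : α sc = Lc tc) :
    (∃ w, 0 < w ∧ w < 1 ∧ α w = q) ∧ (α 0 ∈ La '' Iic ta ∨ α 1 ∈ Lc '' Iic tc) := by
  obtain ⟨w, hw, hwq⟩ := hb.exists_apply_eq_of_lt_of_lt hqb hα hsab hsbc
    (hsa ▸ ha.apply_notMem_range hqa hab hta.1) (hsc ▸ hc.apply_notMem_range hqc hcb htc.1)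
    ⟨tb, htb, hsb.symm⟩
  rcases hw with ⟨haw, hwb⟩ | ⟨hbw, hwc⟩
  · exact ⟨⟨w, unitInterval.nonneg'.trans_lt haw, hwb.trans_le unitInterval.le_one', hwq⟩,
      .inr (hc.apply_one_mem_image_Iic hb hqc hqb hcb htc hα hwb hsbc hsc ⟨tb, hsb.symm⟩ hwq)⟩
  · exact ⟨⟨w, unitInterval.nonneg'.trans_lt hbw, hwc.trans_le unitInterval.le_one', hwq⟩,
      .inl (ha.apply_zero_mem_image_Iic hb hqa hqb hab hta hα hsab hbw hsa ⟨tb, hsb.symm⟩ hwq)⟩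

end FreeArcs

theorem triod_arc_lemma_general {X : Type*} [TopologicalSpace X] [T2Space X]
    (G : TopGraph X) (q : X) (L : Fin 3 → Set.Icc (0:ℝ) 1 → X)
    (hemb : ∀ i, Topology.IsEmbedding (L i)) (hq : ∀ i, L i i0 = q)
    (hmeet : ∀ i j, i ≠ j → Set.range (L i) ∩ Set.range (L j) = {q})
    (hnob : ∀ i, ∀ x ∈ Set.range (L i), x ≠ q → ¬ G.IsBranchPoint x)
    (t : Fin 3 → Set.Icc (0:ℝ) 1) (ht : ∀ i, t i ≠ i0 ∧ t i ≠ i1)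
    (p : Fin 3 → X) (hp : ∀ i, p i = L i (t i))
    (α : Set.Icc (0:ℝ) 1 → X) (hα : Topology.IsEmbedding α)
    (hpα : ∀ i, p i ∈ Set.range α) :
    (∃ s : Set.Icc (0:ℝ) 1, s ≠ i0 ∧ s ≠ i1 ∧ α s = q) ∧
      (α i0 ∈ ⋃ i, L i '' {s | s ≤ t i} ∨ α i1 ∈ ⋃ i, L i '' {s | s ≤ t i}) := by
  have htIoo i : t i ∈ Ioo 0 1 :=
    ⟨lt_of_le_of_ne unitInterval.nonneg' (ht i).1.symm,
      lt_of_le_of_ne unitInterval.le_one' (ht i).2⟩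
  have hfree i : IsFreeArc (L i) := G.isFreeArc (hemb i) fun s hs0 hs1 =>
    Nat.le_of_lt_succ <| not_le.1 <| hnob i _ ⟨s, rfl⟩ fun h =>
      hs0.ne' ((hemb i).injective (h.trans (hq i).symm))
  have hsub i j (hij : i ≠ j) := (hmeet i j hij).subset
  choose s hs using hpα
  have hs' i : α (s i) = L i (t i) := (hs i).trans (hp i)
  have hinj : Injective s := fun i j hij => by_contra fun hne =>
    (hfree i).apply_notMem_range (hq i) (hsub i j hne) (htIoo i).1 ⟨t j, by rw [← hs', ← hs', hij]⟩
  set e := Tuple.sort s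
  have hmono : StrictMono (s ∘ e) :=
    (Tuple.monotone_sort s).strictMono_of_injective (hinj.comp e.injective)
  obtain ⟨⟨w, hw0, hw1, hwq⟩, hend⟩ := (hfree (e 0)).triod_of_lt_of_lt (hfree (e 1)) (hfree (e 2))
    (hq _) (hq _) (hq _) (hsub _ _ (e.injective.ne (by decide)))
    (hsub _ _ (e.injective.ne (by decide))) (htIoo _) (htIoo _) (htIoo _) hα (hmono (by decide))
    (hmono (by decide)) (hs' _) (hs' _) (hs' _)
  exact ⟨⟨w, hw0.ne', hw1.ne, hwq⟩, hend.imp (fun h => mem_iUnion.2 ⟨_, h⟩)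
    (fun h => mem_iUnion.2 ⟨_, h⟩)⟩

/-- If a finite graph `G` contains a simple triod `L₁ ∪ L₂ ∪ L₃` with common point `q`,
whose legs contain no branch points of `G` off `q`, and `pᵢ` is interior to `Lᵢ`,
then any arc in `G` through `p₁, p₂, p₃` contains `q` in its interior and has an
endpoint on `[q,p₁] ∪ [q,p₂] ∪ [q,p₃]`. -/
theorem triod_arc_lemma {X : Type*} [TopologicalSpace X] [T2Space X] [ConnectedSpace X]
    (G : TopGraph X) (q : X) (L : Fin 3 → Set.Icc (0:ℝ) 1 → X)
    (hemb : ∀ i, Topology.IsEmbedding (L i)) (hq : ∀ i, L i i0 = q)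
    (hmeet : ∀ i j, i ≠ j → Set.range (L i) ∩ Set.range (L j) = {q})
    (hnob : ∀ i, ∀ x ∈ Set.range (L i), x ≠ q → ¬ G.IsBranchPoint x)
    (t : Fin 3 → Set.Icc (0:ℝ) 1) (ht : ∀ i, t i ≠ i0 ∧ t i ≠ i1)
    (p : Fin 3 → X) (hp : ∀ i, p i = L i (t i))
    (α : Set.Icc (0:ℝ) 1 → X) (hα : Topology.IsEmbedding α)
    (hpα : ∀ i, p i ∈ Set.range α) :
    (∃ s : Set.Icc (0:ℝ) 1, s ≠ i0 ∧ s ≠ i1 ∧ α s = q) ∧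
      (α i0 ∈ ⋃ i, L i '' {s | s ≤ t i} ∨ α i1 ∈ ⋃ i, L i '' {s | s ≤ t i}) :=
  triod_arc_lemma_general G q L hemb hq hmeet hnob t ht p hp α hα hpα
end

section
/- If a finite graph G is 5-arc connected, then G has no branch point of degree 5 or more. -/
open Set Topology

open Classical
/-!
In each of five edge-germs at `x` take a *leg*, the image of the open half of the edge next to
`x`. Legs are open and pairwise disjoint, and a leg's frontier consists of `x` and the midpoint
of its edge. Follow an arc through one point of each leg, in both directions: it either stays in
the leg up to an end of the arc or leaves it through a frontier point, and by injectivity it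
cannot leave through the midpoint on both sides. Hence every leg contains an end of the arc, or
is left through `x` to the left or to the right of its marked point. Each of these four
alternatives holds for at most one leg, so there are at most four legs.
-/

theorem isOpen_of_isOpen_preimage_of_iUnion_range {X K ι : Type*} [TopologicalSpace X]
    [T2Space X] [TopologicalSpace K] [CompactSpace K] [Finite ι] {f : ι → K → X}
    (hf : ∀ i, Continuous (f i)) (hcover : ⋃ i, range (f i) = univ) {U : Set X}
    (hU : ∀ i, IsOpen (f i ⁻¹' U)) : IsOpen U := by
  have hUc : Uᶜ = ⋃ i, f i '' (f i ⁻¹' Uᶜ) := by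
    ext y
    obtain ⟨i, z, rfl⟩ := mem_iUnion.mp (hcover.symm ▸ mem_univ y : y ∈ ⋃ i, range (f i))
    exact ⟨fun hy => mem_iUnion.mpr ⟨i, z, hy, rfl⟩, fun hy => by
      obtain ⟨j, w, hw, hwz⟩ := mem_iUnion.mp hy
      exact hwz ▸ hw⟩
  rw [← isClosed_compl_iff, hUc]
  exact isClosed_iUnion_of_finite fun i => ((hU i).isClosed_compl.isCompact.image (hf i)).isClosed

section ExitPoints

variable {X : Type*} [TopologicalSpace X] {γ : ℝ → X} {V : Set X} {a b : ℝ}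

theorem exists_last_exit (hγ : Continuous γ) (hV : IsOpen V) (hb : γ b ∈ V)
    (hout : ¬ γ '' Icc a b ⊆ V) :
    ∃ s ∈ Ico a b, γ s ∈ closure V \ V ∧ γ '' Ioc s b ⊆ V := by
  set S := Icc a b ∩ γ ⁻¹' Vᶜ
  have hS : IsCompact S := isCompact_Icc.inter_right (hV.isClosed_compl.preimage hγ)
  have hSne : S.Nonempty := by
    obtain ⟨_, ⟨u, hu, rfl⟩, huV⟩ := not_subset.mp hout
    exact ⟨u, hu, huV⟩
  obtain ⟨⟨has, hsb⟩, hsV⟩ : sSup S ∈ S := hS.sSup_mem hSne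
  set s := sSup S
  have hsb : s < b := hsb.lt_of_ne fun h => hsV (h ▸ hb)
  have hIoc : γ '' Ioc s b ⊆ V := by
    rintro _ ⟨u, hu, rfl⟩
    by_contra huV
    exact (le_csSup hS.bddAbove ⟨⟨has.trans hu.1.le, hu.2⟩, huV⟩).not_gt hu.1
  have hs : s ∈ closure (Ioc s b) := by
    rw [closure_Ioc hsb.ne]
    exact ⟨le_rfl, hsb.le⟩
  have hsV' : γ s ∈ closure V :=
    closure_mono hIoc (image_closure_subset_closure_image hγ (mem_image_of_mem γ hs))
  exact ⟨s, ⟨has, hsb⟩, ⟨hsV', hsV⟩, hIoc⟩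

theorem exists_first_exit (hγ : Continuous γ) (hV : IsOpen V) (ha : γ a ∈ V)
    (hout : ¬ γ '' Icc a b ⊆ V) :
    ∃ s ∈ Ioc a b, γ s ∈ closure V \ V ∧ γ '' Ico a s ⊆ V := by
  obtain ⟨s, ⟨hbs, hsa⟩, hsV, hIoc⟩ :=
    exists_last_exit (γ := γ ∘ Neg.neg) (a := -b) (b := -a) (hγ.comp continuous_neg) hV
      (by simpa using ha) (by rwa [image_comp, image_neg_Icc, neg_neg, neg_neg])
  refine ⟨-s, ⟨lt_neg_of_lt_neg hsa, neg_le.mp hbs⟩, hsV, ?_⟩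
  rwa [image_comp, image_neg_Ioc, neg_neg] at hIoc

theorem exit_cases (hγ : Continuous γ) (hinj : InjOn γ (Icc 0 1)) (hV : IsOpen V) {x m : X}
    (hfr : closure V ⊆ V ∪ {x, m}) {t : ℝ} (ht : t ∈ Icc 0 1) (htV : γ t ∈ V) :
    γ 0 ∈ V ∨ γ 1 ∈ V ∨ (∃ s ∈ Ico 0 t, γ s = x ∧ γ '' Ioc s t ⊆ V) ∨
      (∃ s ∈ Ioc t 1, γ s = x ∧ γ '' Ico t s ⊆ V) := by
  have hxm : ∀ y ∈ closure V \ V, y = x ∨ y = m := fun y hy => by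
    simpa [hy.2] using hfr hy.1
  by_cases h0 : γ '' Icc 0 t ⊆ V
  · exact Or.inl (h0 ⟨0, ⟨le_rfl, ht.1⟩, rfl⟩)
  by_cases h1 : γ '' Icc t 1 ⊆ V
  · exact Or.inr (Or.inl (h1 ⟨1, ⟨ht.2, le_rfl⟩, rfl⟩))
  obtain ⟨a, ha, haV, hIoc⟩ := exists_last_exit hγ hV htV h0
  obtain ⟨c, hc, hcV, hIco⟩ := exists_first_exit hγ hV htV h1
  rcases hxm _ haV with hax | ham
  · exact Or.inr (Or.inr (Or.inl ⟨a, ha, hax, hIoc⟩))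
  rcases hxm _ hcV with hcx | hcm
  · exact Or.inr (Or.inr (Or.inr ⟨c, hc, hcx, hIco⟩))
  -- both ends of the excursion through `V` would be the same point `m`
  have hac : a = c :=
    hinj ⟨ha.1, ha.2.le.trans ht.2⟩ ⟨ht.1.trans hc.1.le, hc.2⟩ (ham.trans hcm.symm)
  linarith [ha.2, hc.1]

end ExitPoints

theorem card_le_four_of_arc_meets_pairwise_disjoint {X ι : Type*} [TopologicalSpace X] [Finite ι]
    {γ : ℝ → X} (hγ : Continuous γ) (hinj : InjOn γ (Icc 0 1)) {V : ι → Set X}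
    (hV : ∀ k, IsOpen (V k)) (hdisj : Pairwise (Function.onFun Disjoint V)) {x : X} {m : ι → X}
    (hfr : ∀ k, closure (V k) ⊆ V k ∪ {x, m k}) {t : ι → ℝ} (ht : ∀ k, t k ∈ Icc 0 1)
    (htV : ∀ k, γ (t k) ∈ V k) : Nat.card ι ≤ 4 := by
  have hsame : ∀ {k l y}, y ∈ V k → y ∈ V l → k = l := fun hk hl => by
    by_contra hkl
    exact disjoint_left.mp (hdisj hkl) hk hl
  set S₁ := {k | γ 0 ∈ V k}
  set S₂ := {k | γ 1 ∈ V k}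
  set S₃ := {k | ∃ s ∈ Ico 0 (t k), γ s = x ∧ γ '' Ioc s (t k) ⊆ V k}
  set S₄ := {k | ∃ s ∈ Ioc (t k) 1, γ s = x ∧ γ '' Ico (t k) s ⊆ V k}
  have h₁ : S₁.Subsingleton := fun k hk l hl => hsame hk hl
  have h₂ : S₂.Subsingleton := fun k hk l hl => hsame hk hl
  have h₃ : S₃.Subsingleton := by
    rintro k ⟨s, hs, hsx, hk⟩ l ⟨s', hs', hsx', hl⟩
    obtain rfl : s = s' :=
      hinj ⟨hs.1, hs.2.le.trans (ht k).2⟩ ⟨hs'.1, hs'.2.le.trans (ht l).2⟩ (hsx.trans hsx'.symm)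
    rcases le_total (t k) (t l) with hkl | hlk
    · exact hsame (htV k) (hl ⟨t k, ⟨hs.2, hkl⟩, rfl⟩)
    · exact hsame (hk ⟨t l, ⟨hs'.2, hlk⟩, rfl⟩) (htV l)
  have h₄ : S₄.Subsingleton := by
    rintro k ⟨s, hs, hsx, hk⟩ l ⟨s', hs', hsx', hl⟩
    obtain rfl : s = s' :=
      hinj ⟨(ht k).1.trans hs.1.le, hs.2⟩ ⟨(ht l).1.trans hs'.1.le, hs'.2⟩ (hsx.trans hsx'.symm)
    rcases le_total (t k) (t l) with hkl | hlk
    · exact hsame (hk ⟨t l, ⟨hkl, hs'.1⟩, rfl⟩) (htV l)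
    · exact hsame (htV k) (hl ⟨t k, ⟨hlk, hs.1⟩, rfl⟩)
  have hcover : univ ⊆ S₁ ∪ S₂ ∪ S₃ ∪ S₄ := fun k _ => by
    rcases exit_cases hγ hinj (hV k) (hfr k) (ht k) (htV k) with h | h | h | h
    exacts [Or.inl (Or.inl (Or.inl h)), Or.inl (Or.inl (Or.inr h)), Or.inl (Or.inr h), Or.inr h]
  calc Nat.card ι = (univ : Set ι).ncard := (ncard_univ ι).symm
    _ ≤ (S₁ ∪ S₂ ∪ S₃ ∪ S₄).ncard := ncard_le_ncard hcover
    _ ≤ S₁.ncard + S₂.ncard + S₃.ncard + S₄.ncard := by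
      grw [ncard_union_le, ncard_union_le, ncard_union_le]
    _ ≤ 1 + 1 + 1 + 1 := by
      gcongr <;> exact ncard_le_one_iff_subsingleton.mpr ‹_›

theorem IsArc.exists_path {X : Type*} [TopologicalSpace X] {A : Set X} (hA : IsArc A) :
    ∃ γ : ℝ → X, Continuous γ ∧ InjOn γ (Icc 0 1) ∧ A ⊆ γ '' Icc 0 1 := by
  obtain ⟨e⟩ := hA
  refine ⟨fun s => e.symm (projIcc 0 1 zero_le_one s),
    continuous_subtype_val.comp (e.symm.continuous.comp continuous_projIcc), ?_, ?_⟩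
  · intro s hs s' hs' h
    have := e.symm.injective (Subtype.ext h)
    rwa [projIcc_of_mem _ hs, projIcc_of_mem _ hs', Subtype.mk.injEq] at this
  · intro y hy
    exact ⟨e ⟨y, hy⟩, (e ⟨y, hy⟩).2, by simp [projIcc_val]⟩

def endPt : Bool → Icc (0:ℝ) 1
  | false => i0
  | true => i1

noncomputable def midPt : Icc (0:ℝ) 1 := ⟨1/2, by norm_num⟩

def openHalf : Bool → Set (Icc (0:ℝ) 1)
  | false => Subtype.val ⁻¹' Ioo 0 (1/2)
  | true => Subtype.val ⁻¹' Ioo (1/2) 1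

def closedHalf : Bool → Set (Icc (0:ℝ) 1)
  | false => Subtype.val ⁻¹' Iic (1/2)
  | true => Subtype.val ⁻¹' Ici (1/2)

theorem isOpen_openHalf (b : Bool) : IsOpen (openHalf b) := by
  cases b <;> exact isOpen_Ioo.preimage continuous_subtype_val

theorem isClosed_closedHalf (b : Bool) : IsClosed (closedHalf b) := by
  cases b
  · exact isClosed_Iic.preimage continuous_subtype_val
  · exact isClosed_Ici.preimage continuous_subtype_val

theorem openHalf_subset_closedHalf (b : Bool) : openHalf b ⊆ closedHalf b := by
  cases b <;> intro s hs
  exacts [hs.2.le, hs.1.le]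

theorem closedHalf_subset (b : Bool) : closedHalf b ⊆ openHalf b ∪ {endPt b, midPt} := by
  intro s hs
  obtain ⟨s, hs0, hs1⟩ := s
  simp only [mem_union, mem_insert_iff, mem_singleton_iff, Subtype.ext_iff, endPt, midPt, i0, i1]
  cases b
  · simp only [closedHalf, mem_preimage, mem_Iic] at hs
    simp only [openHalf, mem_preimage, mem_Ioo]
    rcases hs0.eq_or_lt with h | h <;> rcases hs.eq_or_lt with h' | h' <;> simp_all
  · simp only [closedHalf, mem_preimage, mem_Ici] at hs
    simp only [openHalf, mem_preimage, mem_Ioo]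
    rcases hs1.eq_or_lt with h | h <;> rcases hs.eq_or_lt with h' | h' <;> simp_all

theorem i0_notMem_openHalf (b : Bool) : i0 ∉ openHalf b := by
  cases b <;> simp [openHalf, i0]

theorem i1_notMem_openHalf (b : Bool) : i1 ∉ openHalf b := by
  cases b <;> norm_num [openHalf, i1]

theorem disjoint_openHalf_false_true : Disjoint (openHalf false) (openHalf true) :=
  disjoint_left.mpr fun _ h h' => (h.2.trans h'.1).false

theorem openHalf_nonempty (b : Bool) : (openHalf b).Nonempty := by
  cases b
  · exact ⟨⟨1/4, by norm_num, by norm_num⟩, by norm_num, by norm_num⟩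
  · exact ⟨⟨3/4, by norm_num, by norm_num⟩, by norm_num, by norm_num⟩

namespace TopGraph

variable {X : Type*} [TopologicalSpace X] (G : TopGraph X)

def leg (i : Fin G.n) (b : Bool) : Set X := G.edge i '' openHalf b

theorem leg_nonempty (i : Fin G.n) (b : Bool) : (G.leg i b).Nonempty :=
  (openHalf_nonempty b).image _

theorem preimage_edge_leg_self (i : Fin G.n) (b : Bool) : G.edge i ⁻¹' G.leg i b = openHalf b :=
  (G.emb i).injective.preimage_image _

theorem preimage_edge_leg_of_ne {i j : Fin G.n} (hij : i ≠ j) (b : Bool) :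
    G.edge j ⁻¹' G.leg i b = ∅ := by
  refine eq_empty_of_forall_notMem fun s ⟨u, hu, hus⟩ => ?_
  rcases (G.meet i j hij _ ⟨mem_range_self u, s, hus.symm⟩).1 with h | h
  · exact i0_notMem_openHalf b ((G.emb i).injective h ▸ hu)
  · exact i1_notMem_openHalf b ((G.emb i).injective h ▸ hu)

theorem isOpen_leg [T2Space X] (i : Fin G.n) (b : Bool) : IsOpen (G.leg i b) := by
  refine isOpen_of_isOpen_preimage_of_iUnion_range (fun j => (G.emb j).continuous) G.cover
    fun j => ?_
  rcases eq_or_ne i j with rfl | hij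
  · rw [preimage_edge_leg_self]
    exact isOpen_openHalf b
  · rw [preimage_edge_leg_of_ne G hij]
    exact isOpen_empty

theorem disjoint_leg {q r : Fin G.n × Bool} (hqr : q ≠ r) :
    Disjoint (G.leg q.1 q.2) (G.leg r.1 r.2) := by
  obtain ⟨i, b⟩ := q
  obtain ⟨j, c⟩ := r
  rcases eq_or_ne i j with rfl | hij
  · have hbc : b ≠ c := fun h => hqr (h ▸ rfl)
    refine (disjoint_image_iff (G.emb i).injective).mpr ?_
    cases b <;> cases c <;> first
      | exact absurd rfl hbc
      | exact disjoint_openHalf_false_true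
      | exact disjoint_openHalf_false_true.symm
  · refine disjoint_left.mpr fun y hy ⟨u, _, hu⟩ => ?_
    have hu' : u ∈ G.edge j ⁻¹' G.leg i b := by rwa [mem_preimage, hu]
    rwa [preimage_edge_leg_of_ne G hij] at hu'

theorem closure_leg_subset [T2Space X] (i : Fin G.n) (b : Bool) :
    closure (G.leg i b) ⊆ G.leg i b ∪ {G.edge i (endPt b), G.edge i midPt} := by
  have hcl : IsClosed (G.edge i '' closedHalf b) :=
    ((isClosed_closedHalf b).isCompact.image (G.emb i).continuous).isClosed
  calc closure (G.leg i b) ⊆ G.edge i '' closedHalf b :=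
        closure_minimal (image_mono (openHalf_subset_closedHalf b)) hcl
    _ ⊆ G.edge i '' (openHalf b ∪ {endPt b, midPt}) := image_mono (closedHalf_subset b)
    _ = G.leg i b ∪ {G.edge i (endPt b), G.edge i midPt} := by
      rw [image_union, image_insert_eq, image_singleton, leg]

theorem degree_eq_card (x : X) :
    G.degree x = Fintype.card {q : Fin G.n × Bool // G.edge q.1 (endPt q.2) = x} := by
  rw [Fintype.card_subtype, Finset.card_filter, degree, Fintype.sum_prod_type]
  refine Finset.sum_congr rfl fun i _ => ?_
  rw [Fintype.sum_bool, add_comm]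
  rfl

end TopGraph

theorem five_ac_no_degree_five_general {X : Type*} [TopologicalSpace X] [T2Space X]
    (G : TopGraph X) (h : NArcConnected X 5) :
    ∀ x : X, ¬ (5 ≤ G.degree x) := by
  intro x hx
  obtain ⟨g⟩ : Nonempty (Fin 5 ↪ {q : Fin G.n × Bool // G.edge q.1 (endPt q.2) = x}) :=
    Function.Embedding.nonempty_of_card_le (by rwa [Fintype.card_fin, ← G.degree_eq_card])
  set V : Fin 5 → Set X := fun k => G.leg (g k).1.1 (g k).1.2
  choose p hp using fun k => G.leg_nonempty (g k).1.1 (g k).1.2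
  obtain ⟨A, hA, hpA⟩ := h p
  obtain ⟨γ, hγ, hinj, hAγ⟩ := hA.exists_path
  choose t ht hγt using fun k => hAγ (hpA k)
  have hfr : ∀ k, closure (V k) ⊆ V k ∪ {x, G.edge (g k).1.1 midPt} := fun k => by
    simpa only [(g k).2] using G.closure_leg_subset (g k).1.1 (g k).1.2
  have hcard := card_le_four_of_arc_meets_pairwise_disjoint hγ hinj
    (fun k => G.isOpen_leg _ _)
    (fun k l hkl => G.disjoint_leg fun h => hkl (g.injective (Subtype.ext h)))
    hfr ht fun k => (hγt k).symm ▸ hp k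
  simp at hcard

/-- A `5`-arc connected finite graph has no branch point of degree `5` or more. -/
theorem five_ac_no_degree_five {X : Type*} [TopologicalSpace X] [T2Space X]
    [ConnectedSpace X] (G : TopGraph X) (h : NArcConnected X 5) :
    ∀ x : X, ¬ (5 ≤ G.degree x) :=
  five_ac_no_degree_five_general G h
end

section
/- Suppose R is the long ray with its order topology and τ is a compact Hausdorff topology on the underlying set of R that is coarser than or equal to the order topology on every closed bounded subinterval (i.e., the identity from R with the order topology to (R, τ) is a continuous bijection). Then there exists a point x in R such that every τ-open set containing x contains a tail (t, ∞) for some t in R. -/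
open Set Topology

/-!
Every monotone sequence in the long ray converges in the order topology: countably many
countable ordinals have a countable supremum, so the lexicographic product `ω₁ ×ₗ [0,1)` has
the least upper bound it needs. By continuity of the identity the sequence also converges
for `τ`. Now if the filter `atTop` had two distinct `τ`-cluster points, a monotone sequence
could visit disjoint closed neighbourhoods of them alternately, and its limit would lie in
both. So the compact space `(LongRay, τ)` sees `atTop` with a single cluster point, which is
then a limit of `atTop`: its neighbourhoods contain tails.
-/

open Filter

section

variable {X : Type*} [Preorder X] [Nonempty X]

theorem exists_monotone_succ_mem {S : ℕ → Set X} (hS : ∀ n a, ∃ b, a ≤ b ∧ b ∈ S n) :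
    ∃ w : ℕ → X, Monotone w ∧ ∀ n, w (n + 1) ∈ S n := by
  choose next hle hmem using hS
  let w : ℕ → X := fun n => Nat.rec (Classical.arbitrary X) next n
  exact ⟨w, monotone_nat_of_le_succ fun n => hle n (w n), fun n => hmem n (w n)⟩

variable [IsDirectedOrder X] [TopologicalSpace X]

theorem eq_of_clusterPt_atTop [T25Space X]
    (h : ∀ f : ℕ → X, Monotone f → ∃ z, Tendsto f atTop (𝓝 z)) {x y : X}
    (hx : ClusterPt x atTop) (hy : ClusterPt y atTop) : x = y := by
  by_contra hxy
  obtain ⟨U, hU, V, hV, hUV⟩ := exists_nhds_disjoint_closure hxy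
  have hcofinal : ∀ (n : ℕ) (a : X), ∃ b, a ≤ b ∧ b ∈ if Even n then U else V := by
    intro n
    split_ifs
    · exact frequently_atTop.1 (hx.frequently hU)
    · exact frequently_atTop.1 (hy.frequently hV)
  obtain ⟨w, hw, hwS⟩ := exists_monotone_succ_mem hcofinal
  obtain ⟨z, hz⟩ := h w hw
  have hzU : z ∈ closure U := by
    refine mem_closure_of_frequently_of_tendsto (frequently_atTop.2 fun n => ?_) hz
    exact ⟨2 * n + 1, by omega, by simpa using hwS (2 * n)⟩
  have hzV : z ∈ closure V := by
    refine mem_closure_of_frequently_of_tendsto (frequently_atTop.2 fun n => ?_) hz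
    exact ⟨2 * n + 1 + 1, by omega, by simpa using hwS (2 * n + 1)⟩
  exact hUV.ne_of_mem hzU hzV rfl

theorem exists_atTop_le_nhds [CompactSpace X] [T2Space X]
    (h : ∀ f : ℕ → X, Monotone f → ∃ z, Tendsto f atTop (𝓝 z)) :
    ∃ x : X, atTop ≤ 𝓝 x := by
  obtain ⟨x, hx⟩ := exists_clusterPt_of_compactSpace (atTop : Filter X)
  exact ⟨x, le_nhds_of_unique_clusterPt fun y hy => eq_of_clusterPt_atTop h hy hx⟩

end

namespace Prod.Lex

variable {α β : Type*} [LinearOrder α] [LinearOrder β] {S : Set (α ×ₗ β)}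

theorem isLUB_toLex_of_isGreatest {a : α} {s : β}
    (ha : IsGreatest ((fun p => (ofLex p).1) '' S) a)
    (hs : IsLUB {b | toLex (a, b) ∈ S} s) : IsLUB S (toLex (a, s)) := by
  refine ⟨fun q hq => ?_, fun q hq => ?_⟩
  · obtain ⟨⟨x, y⟩, rfl⟩ := toLex.surjective q
    rcases (ha.2 ⟨_, hq, rfl⟩).lt_or_eq with h | rfl
    · exact toLex_le_toLex.2 (.inl h)
    · exact toLex_le_toLex.2 (.inr ⟨rfl, hs.1 hq⟩)
  · obtain ⟨⟨x, y⟩, rfl⟩ := toLex.surjective q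
    obtain ⟨p, hp, hpa⟩ := ha.1
    have hax : a ≤ x := hpa ▸ monotone_fst_ofLex (hq hp)
    rcases hax.lt_or_eq with h | rfl
    · exact toLex_le_toLex.2 (.inl h)
    · refine toLex_le_toLex.2 (.inr ⟨rfl, hs.2 fun b hb => ?_⟩)
      simpa [toLex_le_toLex] using hq hb

theorem isLUB_toLex_of_not_bddAbove {a a' : α} {b₀ : β}
    (ha : IsGreatest ((fun p => (ofLex p).1) '' S) a)
    (hunb : ¬ BddAbove {b | toLex (a, b) ∈ S}) (haa' : a ⋖ a') (hb₀ : ∀ b, b₀ ≤ b) :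
    IsLUB S (toLex (a', b₀)) := by
  refine ⟨fun q hq => ?_, fun q hq => ?_⟩
  · exact le_iff.2 (.inl ((ha.2 ⟨q, hq, rfl⟩).trans_lt haa'.lt))
  · obtain ⟨⟨x, y⟩, rfl⟩ := toLex.surjective q
    obtain ⟨p, hp, hpa⟩ := ha.1
    have hax : a < x := by
      refine (hpa ▸ monotone_fst_ofLex (hq hp)).lt_of_ne ?_
      rintro rfl
      refine hunb ⟨y, fun b hb => ?_⟩
      simpa [toLex_le_toLex] using hq hb
    rcases (not_lt.1 fun h => hax.not_ge (haa'.le_of_lt h)).lt_or_eq with h | rfl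
    · exact toLex_le_toLex.2 (.inl h)
    · exact toLex_le_toLex.2 (.inr ⟨rfl, hb₀ y⟩)

theorem isLUB_toLex_of_not_mem {c : α} {b₀ : β}
    (hc : IsLUB ((fun p => (ofLex p).1) '' S) c) (hcS : c ∉ (fun p => (ofLex p).1) '' S)
    (hb₀ : ∀ b, b₀ ≤ b) : IsLUB S (toLex (c, b₀)) := by
  refine ⟨fun q hq => ?_, fun q hq => ?_⟩
  · have hq' : (ofLex q).1 ∈ (fun p => (ofLex p).1) '' S := ⟨q, hq, rfl⟩
    exact le_iff.2 (.inl ((hc.1 hq').lt_of_ne (ne_of_mem_of_not_mem hq' hcS)))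
  · obtain ⟨⟨x, y⟩, rfl⟩ := toLex.surjective q
    have hcx : c ≤ x := hc.2 (by rintro _ ⟨p, hp, rfl⟩; exact monotone_fst_ofLex (hq hp))
    rcases hcx.lt_or_eq with h | rfl
    · exact toLex_le_toLex.2 (.inl h)
    · exact toLex_le_toLex.2 (.inr ⟨rfl, hb₀ y⟩)

theorem exists_isLUB {b₀ : β} (hb₀ : ∀ b, b₀ ≤ b)
    (hα : ∃ c, IsLUB ((fun p => (ofLex p).1) '' S) c) (hcov : ∀ a : α, ∃ a', a ⋖ a')
    (hβ : ∀ T : Set β, T.Nonempty → BddAbove T → ∃ s, IsLUB T s) : ∃ z, IsLUB S z := by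
  obtain ⟨c, hc⟩ := hα
  by_cases hcS : c ∈ (fun p => (ofLex p).1) '' S
  · have hgr : IsGreatest _ c := ⟨hcS, hc.1⟩
    by_cases hbdd : BddAbove {b | toLex (c, b) ∈ S}
    · obtain ⟨p, hp, rfl⟩ := hcS
      obtain ⟨s, hs⟩ := hβ _ ⟨(ofLex p).2, hp⟩ hbdd
      exact ⟨_, isLUB_toLex_of_isGreatest hgr hs⟩
    · obtain ⟨c', hcc'⟩ := hcov c
      exact ⟨_, isLUB_toLex_of_not_bddAbove hgr hbdd hcc' hb₀⟩
  · exact ⟨_, isLUB_toLex_of_not_mem hc hcS hb₀⟩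

end Prod.Lex

instance : Nonempty LongRay :=
  ⟨toLex (⟨0, Cardinal.ord_pos.2 (Cardinal.aleph_pos 1)⟩, ⟨0, by norm_num⟩)⟩

theorem Omega1.exists_isLUB_of_countable {s : Set Omega1} (hs : s.Countable) :
    ∃ c, IsLUB s c := by
  have : Countable s := hs.to_subtype
  let f : s → Ordinal := fun a => (a : Omega1).1
  have hω : (Cardinal.aleph 1).ord = Ordinal.omega 1 := Cardinal.ord_aleph 1
  have hlt : iSup f < (Cardinal.aleph 1).ord := by
    rw [hω]
    exact Ordinal.iSup_lt_omega_one fun a => hω ▸ (a : Omega1).2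
  refine ⟨⟨_, hlt⟩, .of_image Subtype.coe_le_coe ?_⟩
  have hbdd : BddAbove (range f) := ⟨_, forall_mem_range.2 fun a => (a : Omega1).2.le⟩
  convert isLUB_csSup' hbdd using 1
  · ext; simp [f]
  · rfl

theorem Omega1.exists_covBy (a : Omega1) : ∃ a', a ⋖ a' := by
  have hlt : Order.succ a.1 < (Cardinal.aleph 1).ord :=
    (Cardinal.isSuccLimit_ord (Cardinal.aleph0_le_aleph 1)).succ_lt a.2
  exact ⟨⟨_, hlt⟩, .of_image (OrderEmbedding.subtype _) (Order.covBy_succ a.1)⟩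

theorem LongRay.exists_isLUB_of_countable {S : Set LongRay} (hS : S.Countable) :
    ∃ z, IsLUB S z := by
  -- the conditionally complete order on the order-connected `Ico 0 1` needs a default point
  have : Inhabited (Ico (0:ℝ) 1) := ⟨⟨0, by norm_num⟩⟩
  exact Prod.Lex.exists_isLUB (α := Omega1) (β := Ico (0:ℝ) 1) (b₀ := ⟨0, by norm_num⟩)
    (fun b => b.2.1) (Omega1.exists_isLUB_of_countable (hS.image _)) Omega1.exists_covBy
    fun T hT hb => ⟨sSup T, isLUB_csSup hT hb⟩

theorem LongRay.exists_tendsto_of_monotone {f : ℕ → LongRay} (hf : Monotone f) :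
    ∃ z, Tendsto f atTop (𝓝 z) :=
  (exists_isLUB_of_countable (countable_range f)).imp fun _ hz => tendsto_atTop_isLUB hf hz

/-- If `τ` is a compact Hausdorff topology on the long ray that is coarser than or
equal to its order topology (the identity map is a continuous bijection), then some
point `x` has the property that every `τ`-open set containing `x` contains a tail
`(t, ∞)`. -/
theorem compactification_point_at_infinity (τ : TopologicalSpace LongRay)
    (hcomp : @CompactSpace LongRay τ) (hT2 : @T2Space LongRay τ)
    (hle : Continuous[longRayTop, τ] (id : LongRay → LongRay)) :
    ∃ x : LongRay, ∀ U : Set LongRay, τ.IsOpen U → x ∈ U →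
      ∃ t : LongRay, Set.Ioi t ⊆ U := by
  have hconv (f : ℕ → LongRay) (hf : Monotone f) : ∃ z, Tendsto f atTop (@nhds _ τ z) :=
    (LongRay.exists_tendsto_of_monotone hf).imp fun z hz =>
      (@Continuous.tendsto _ _ longRayTop τ _ hle z).comp hz
  obtain ⟨x, hx⟩ := @exists_atTop_le_nhds LongRay _ _ _ τ hcomp hT2 hconv
  refine ⟨x, fun U hU hxU => ?_⟩
  obtain ⟨t, ht⟩ := mem_atTop_sets.1 (hx (@IsOpen.mem_nhds _ τ _ _ hU hxU))
  exact ⟨t, fun y hy => ht y hy.le⟩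
end
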